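/- arXiv:1806.11096 — 9 statements merged into one kernel-verified Lean document; each statement's English description precedes it below -/
import Mathlib

section
/- For every set S = {u_1, ..., u_n} ⊂ ℝ^p of n ≥ 3 distinct points, there exists a point u ∈ S that lies on the boundary of the convex hull of S, and a unit vector v ∈ ℝ^p (‖v‖ = 1), such that (1/n) · Σ_{i : u_i ≠ u} ⟨(u_i − u)/‖u_i − u‖, v⟩ ≥ 1/2. -/
/-!
Let `a, b` be a diametral pair of the points, at distance `D`; each is a farthest point from the
other, hence on the boundary of the convex hull. For any point `z` put `s = ⟪z - a, b - a⟫` and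
`t = ⟪z - b, a - b⟫`, so that `s + t = D²`. As `‖z - b‖ ≤ D` forces `s ≥ 0` and `‖z - a‖ ≤ D`, the
cosine of the angle at `a` is at least `s / D²`; likewise at `b`. So the two cosines sum to at
least `1` (also for `z ∈ {a, b}`, where the normalized vector `0⁻¹ • 0` is `0`), the sums for
`(a, (b - a) / D)` and `(b, (a - b) / D)` add up to at least `n`, and one of them is `≥ n / 2`.
-/

open scoped RealInnerProductSpace

open Finset Metric

theorem exists_diametral_pair {E ι : Type*} [NormedAddCommGroup E] [Finite ι] (u : ι → E)
    (h : ∃ i l, u i ≠ u l) :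
    ∃ j k, u j ≠ u k ∧ ∀ i l, ‖u i - u l‖ ≤ ‖u k - u j‖ := by
  obtain ⟨i₀, l₀, hne⟩ := h
  have : Nonempty ι := ⟨i₀⟩
  obtain ⟨⟨j, k⟩, hmax⟩ := Finite.exists_max fun q : ι × ι => ‖u q.2 - u q.1‖
  refine ⟨j, k, fun hjk => ?_, fun i l => hmax (l, i)⟩
  have hpos : 0 < ‖u i₀ - u l₀‖ := norm_pos_iff.2 (sub_ne_zero.2 hne)
  have := hmax (l₀, i₀)
  simp only [hjk, sub_self, norm_zero] at this
  linarith

section Frontier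

variable {E : Type*} [NormedAddCommGroup E] [NormedSpace ℝ E]

theorem mem_frontier_of_subset_closedBall {K : Set E} {c w : E} (hw : w ∈ K) (hwc : w ≠ c)
    (hK : K ⊆ closedBall c (dist w c)) : w ∈ frontier K := by
  refine ⟨subset_closure hw, fun hint => ?_⟩
  have hball := interior_mono hK hint
  rw [interior_closedBall c (dist_ne_zero.2 hwc), mem_ball] at hball
  exact lt_irrefl _ hball

theorem mem_frontier_convexHull_of_forall_dist_le {s : Set E} {c w : E} (hw : w ∈ s)
    (hwc : w ≠ c) (hfar : ∀ z ∈ s, dist z c ≤ dist w c) : w ∈ frontier (convexHull ℝ s) :=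
  mem_frontier_of_subset_closedBall (subset_convexHull ℝ s hw) hwc
    (convexHull_min (fun z hz => mem_closedBall.2 (hfar z hz)) (convex_closedBall _ _))

end Frontier

section Diametral

variable {E : Type*} [NormedAddCommGroup E] [InnerProductSpace ℝ E]

theorem inner_sub_nonneg_of_norm_sub_le {a b z : E} (h : ‖z - b‖ ≤ ‖b - a‖) :
    0 ≤ ⟪z - a, b - a⟫ := by
  have hsq := norm_sub_sq_real (z - a) (b - a)
  rw [sub_sub_sub_cancel_right] at hsq
  nlinarith [norm_nonneg (z - b), sq_nonneg ‖z - a‖]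

theorem inner_div_sq_le_inner_normalize {a b z : E} (hza : ‖z - a‖ ≤ ‖b - a‖)
    (hzb : ‖z - b‖ ≤ ‖b - a‖) :
    ⟪z - a, b - a⟫ / ‖b - a‖ ^ 2 ≤ ⟪‖z - a‖⁻¹ • (z - a), ‖b - a‖⁻¹ • (b - a)⟫ := by
  rw [real_inner_smul_left, real_inner_smul_right]
  rcases (norm_nonneg (z - a)).eq_or_lt with hz | hz
  · rw [eq_comm, norm_eq_zero] at hz
    simp [hz]
  · rw [← mul_assoc, ← mul_inv, ← div_eq_inv_mul, mul_comm, sq]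
    exact div_le_div_of_nonneg_left (inner_sub_nonneg_of_norm_sub_le hzb)
      (mul_pos (hz.trans_le hza) hz) (by gcongr)

theorem one_le_inner_normalize_add_inner_normalize {a b z : E} (hab : a ≠ b)
    (hza : ‖z - a‖ ≤ ‖b - a‖) (hzb : ‖z - b‖ ≤ ‖b - a‖) :
    1 ≤ ⟪‖z - a‖⁻¹ • (z - a), ‖b - a‖⁻¹ • (b - a)⟫
      + ⟪‖z - b‖⁻¹ • (z - b), ‖a - b‖⁻¹ • (a - b)⟫ := by
  have hst : ⟪z - a, b - a⟫ + ⟪z - b, a - b⟫ = ‖b - a‖ ^ 2 := by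
    rw [← neg_sub b a, inner_neg_right, ← sub_eq_add_neg, ← inner_sub_left,
      sub_sub_sub_cancel_left, real_inner_self_eq_norm_sq]
  have ha := inner_div_sq_le_inner_normalize hza hzb
  have hb := inner_div_sq_le_inner_normalize (norm_sub_rev a b ▸ hzb) (norm_sub_rev a b ▸ hza)
  calc (1 : ℝ) = ⟪z - a, b - a⟫ / ‖b - a‖ ^ 2 + ⟪z - b, a - b⟫ / ‖a - b‖ ^ 2 := by
        rw [norm_sub_rev a b, ← add_div, hst, div_self (by simpa [sub_eq_zero] using hab.symm)]
    _ ≤ _ := add_le_add ha hb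

variable {ι : Type*} [Fintype ι]

theorem card_le_sum_inner_normalize_add_sum_inner_normalize (u : ι → E) {j k : ι}
    (hjk : u j ≠ u k) (hmax : ∀ i l, ‖u i - u l‖ ≤ ‖u k - u j‖) :
    (Fintype.card ι : ℝ) ≤ ∑ i, ⟪‖u i - u j‖⁻¹ • (u i - u j), ‖u k - u j‖⁻¹ • (u k - u j)⟫
      + ∑ i, ⟪‖u i - u k‖⁻¹ • (u i - u k), ‖u j - u k‖⁻¹ • (u j - u k)⟫ := by
  rw [← sum_add_distrib, Fintype.card_eq_sum_ones, Nat.cast_sum, Nat.cast_one]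
  exact sum_le_sum fun i _ =>
    one_le_inner_normalize_add_inner_normalize hjk (hmax i j) (hmax i k)

theorem exists_farthest_half_card_le_sum_inner_normalize (u : ι → E) (h : ∃ i l, u i ≠ u l) :
    ∃ j k, u j ≠ u k ∧ (∀ i, dist (u i) (u k) ≤ dist (u j) (u k)) ∧
      (Fintype.card ι : ℝ) / 2
        ≤ ∑ i, ⟪‖u i - u j‖⁻¹ • (u i - u j), ‖u k - u j‖⁻¹ • (u k - u j)⟫ := by
  obtain ⟨j, k, hjk, hmax⟩ := exists_diametral_pair u h
  have hcard := card_le_sum_inner_normalize_add_sum_inner_normalize u hjk hmax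
  simp only [dist_eq_norm]
  by_cases hj : (Fintype.card ι : ℝ) / 2 ≤ ∑ i, ⟪‖u i - u j‖⁻¹ • (u i - u j),
      ‖u k - u j‖⁻¹ • (u k - u j)⟫
  · exact ⟨j, k, hjk, fun i => norm_sub_rev (u j) (u k) ▸ hmax i k, hj⟩
  · exact ⟨k, j, hjk.symm, fun i => hmax i j, by linarith⟩

end Diametral

/-- **Geometric Lemma.** For every set `S = {u 1, …, u n} ⊂ ℝ^p` of `n ≥ 3` distinct
points, there exists a point `u j ∈ S` lying on the boundary of the convex hull of `S`
and a unit vector `v` such that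
`(1/n) · ∑_{i : u i ≠ u j} ⟨(u i − u j)/‖u i − u j‖, v⟩ ≥ 1/2`. -/
theorem geometric_lemma {p n : ℕ} (hn : 3 ≤ n)
    (u : Fin n → EuclideanSpace ℝ (Fin p)) (hu : Function.Injective u) :
    ∃ j : Fin n, ∃ v : EuclideanSpace ℝ (Fin p),
      u j ∈ frontier (convexHull ℝ (Set.range u)) ∧ ‖v‖ = 1 ∧
      (1 : ℝ) / (n : ℝ) *
          ∑ i ∈ Finset.univ.erase j, ⟪‖u i - u j‖⁻¹ • (u i - u j), v⟫ ≥ 1 / 2 := by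
  have hu₀₁ : u ⟨0, by omega⟩ ≠ u ⟨1, by omega⟩ := hu.ne (by simp)
  obtain ⟨j, k, hjk, hfar, hhalf⟩ :=
    exists_farthest_half_card_le_sum_inner_normalize u ⟨_, _, hu₀₁⟩
  refine ⟨j, ‖u k - u j‖⁻¹ • (u k - u j),
    mem_frontier_convexHull_of_forall_dist_le (Set.mem_range_self j) hjk
      (Set.forall_mem_range.2 hfar),
    norm_smul_inv_norm (sub_ne_zero.2 hjk.symm), ?_⟩
  rw [Fintype.card_fin] at hhalf
  rw [sum_erase _ (by simp)]
  have hn₀ : (0 : ℝ) < n := by positivity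
  rw [ge_iff_le, one_div_mul_eq_div, le_div_iff₀ hn₀]
  linarith
end

section
/- Let S = {u_1, ..., u_n} ⊂ ℝ^p be a set of n ≥ 3 distinct points. Then there exist at least n/6 points u ∈ S having the property that for some unit vector v ∈ ℝ^p (‖v‖ = 1), (1/n) · Σ_{i : u_i ≠ u} ⟨(u_i − u)/‖u_i − u‖, v⟩ ≥ 1/4. Precisely, the cardinality of the set of points u ∈ S with this property is at least n/6. -/
open scoped RealInnerProductSpace

/-! Write `s_j = ∑ᵢ (uᵢ - uⱼ) / ‖uᵢ - uⱼ‖`, so that `uⱼ` has the property iff `‖s_j‖ ≥ n / 4`.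
Expanding `∑ⱼ ‖s_j‖²` gives `n (n - 1)` plus, for every ordered triple of distinct points, the
cosine of the angle at the first one; the three cosines of a triangle sum to at least `1`, hence
`∑ⱼ ‖s_j‖² ≥ n (n² - 1) / 3`. As `‖s_j‖ ≤ n` always and `‖s_j‖ < n / 4` at the other points,
fewer than `n / 6` such points would make this sum too small. -/

open Finset Function

section UnitDir

variable {E : Type*} [NormedAddCommGroup E] [InnerProductSpace ℝ E]

noncomputable def unitDir (x y : E) : E := ‖y - x‖⁻¹ • (y - x)

@[simp]
lemma unitDir_self (x : E) : unitDir x x = 0 := by simp [unitDir]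

lemma norm_unitDir {x y : E} (h : x ≠ y) : ‖unitDir x y‖ = 1 :=
  norm_smul_inv_norm (sub_ne_zero.2 h.symm)

lemma norm_unitDir_le (x y : E) : ‖unitDir x y‖ ≤ 1 := by
  rcases eq_or_ne x y with rfl | h
  · simp
  · exact (norm_unitDir h).le

lemma real_inner_unitDir_unitDir (x y z : E) :
    ⟪unitDir x y, unitDir x z⟫ =
      (‖y - x‖ ^ 2 + ‖z - x‖ ^ 2 - ‖y - z‖ ^ 2) / (2 * ‖y - x‖ * ‖z - x‖) := by
  have hcos : ‖y - z‖ ^ 2 = ‖y - x‖ ^ 2 - 2 * ⟪y - x, z - x⟫ + ‖z - x‖ ^ 2 := by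
    rw [← norm_sub_sq_real, sub_sub_sub_cancel_right]
  rw [unitDir, unitDir, real_inner_smul_left, real_inner_smul_right, hcos]
  ring

lemma one_le_sum_cos_of_triangle {a b c : ℝ} (ha : 0 < a) (hb : 0 < b) (hc : 0 < c)
    (hab : c ≤ a + b) (hbc : a ≤ b + c) (hca : b ≤ c + a) :
    1 ≤ (b ^ 2 + c ^ 2 - a ^ 2) / (2 * b * c) + (c ^ 2 + a ^ 2 - b ^ 2) / (2 * c * a)
      + (a ^ 2 + b ^ 2 - c ^ 2) / (2 * a * b) := by
  have hid : (b ^ 2 + c ^ 2 - a ^ 2) / (2 * b * c) + (c ^ 2 + a ^ 2 - b ^ 2) / (2 * c * a)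
      + (a ^ 2 + b ^ 2 - c ^ 2) / (2 * a * b)
      = 1 + (b + c - a) * (c + a - b) * (a + b - c) / (2 * a * b * c) := by
    field_simp
    ring
  rw [hid, le_add_iff_nonneg_right]
  have := mul_nonneg (mul_nonneg (sub_nonneg.2 hbc) (sub_nonneg.2 hca)) (sub_nonneg.2 hab)
  positivity

lemma one_le_inner_unitDir_add_of_pairwise_ne {a b c : E} (hab : a ≠ b) (hbc : b ≠ c)
    (hac : a ≠ c) :
    1 ≤ ⟪unitDir a b, unitDir a c⟫ + ⟪unitDir b a, unitDir b c⟫ + ⟪unitDir c a, unitDir c b⟫ := by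
  have hP := norm_sub_le_norm_sub_add_norm_sub a c b
  have hQ := norm_sub_le_norm_sub_add_norm_sub b a c
  have hR := norm_sub_le_norm_sub_add_norm_sub a b c
  simp only [real_inner_unitDir_unitDir]
  rw [norm_sub_rev b a, norm_sub_rev c a, norm_sub_rev c b] at *
  exact (one_le_sum_cos_of_triangle (norm_sub_pos_iff.2 hbc) (norm_sub_pos_iff.2 hac)
    (norm_sub_pos_iff.2 hab) (by linarith) (by linarith) (by linarith)).trans_eq (by ring)

lemma one_le_inner_unitDir_add {a b c : E} (h : ¬(a = b ∧ b = c)) :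
    1 ≤ ⟪unitDir a b, unitDir a c⟫ + ⟪unitDir b a, unitDir b c⟫ + ⟪unitDir c a, unitDir c b⟫ := by
  by_cases hab : a = b
  · subst hab
    have hac : a ≠ c := fun hac => h ⟨rfl, hac⟩
    simp [norm_unitDir hac.symm]
  by_cases hbc : b = c
  · subst hbc
    simp [norm_unitDir hab]
  by_cases hac : a = c
  · subst hac
    simp [norm_unitDir (Ne.symm hab)]
  exact one_le_inner_unitDir_add_of_pairwise_ne hab hbc hac

end UnitDir

section Resultant

variable {E ι : Type*} [NormedAddCommGroup E] [InnerProductSpace ℝ E] [Fintype ι]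

noncomputable def resultant (u : ι → E) (j : ι) : E := ∑ i, unitDir (u j) (u i)

lemma norm_resultant_le (u : ι → E) (j : ι) : ‖resultant u j‖ ≤ Fintype.card ι :=
  (norm_sum_le _ _).trans <| by
    simpa using Finset.sum_le_sum fun i (_ : i ∈ univ) => norm_unitDir_le (u j) (u i)

lemma real_inner_resultant [DecidableEq ι] (u : ι → E) (j : ι) (v : E) :
    ⟪resultant u j, v⟫ = ∑ i ∈ univ.erase j, ⟪unitDir (u j) (u i), v⟫ := by
  rw [resultant, sum_inner, Finset.sum_erase _ (by simp)]

theorem card_pow_three_sub_card_le_three_mul_sum_norm_resultant_sq {u : ι → E}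
    (hu : Injective u) :
    (Fintype.card ι : ℝ) ^ 3 - Fintype.card ι ≤ 3 * ∑ j, ‖resultant u j‖ ^ 2 := by
  classical
  set g : ι → ι → ι → ℝ := fun j i k => ⟪unitDir (u j) (u i), unitDir (u j) (u k)⟫
  have hsq : ∑ j, ‖resultant u j‖ ^ 2 = ∑ x, ∑ y, ∑ z, g x y z := by
    simp only [g, resultant, ← real_inner_self_eq_norm_sq, sum_inner, inner_sum]
    exact Finset.sum_congr rfl fun _ _ => Finset.sum_comm
  have hswap : ∑ x, ∑ y, ∑ z, g y x z = ∑ x, ∑ y, ∑ z, g x y z := Finset.sum_comm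
  have hrotate : ∑ x, ∑ y, ∑ z, g z x y = ∑ x, ∑ y, ∑ z, g x y z :=
    (Finset.sum_congr rfl fun _ _ => Finset.sum_comm).trans Finset.sum_comm
  have htriangle : ∀ x y z,
      (1 : ℝ) - (if x = y ∧ y = z then 1 else 0) ≤ g x y z + g y x z + g z x y := by
    intro x y z
    split_ifs with h
    · obtain ⟨rfl, rfl⟩ := h
      simp [g]
    · rw [sub_zero]
      exact one_le_inner_unitDir_add (by rwa [hu.eq_iff, hu.eq_iff])
  have hcount : ∑ x : ι, ∑ y : ι, ∑ z : ι, ((1 : ℝ) - if x = y ∧ y = z then 1 else 0)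
      = (Fintype.card ι : ℝ) ^ 3 - Fintype.card ι := by
    simp [Finset.sum_sub_distrib, ite_and]
    ring
  calc (Fintype.card ι : ℝ) ^ 3 - Fintype.card ι
      = ∑ x, ∑ y, ∑ z, ((1 : ℝ) - if x = y ∧ y = z then 1 else 0) := hcount.symm
    _ ≤ ∑ x, ∑ y, ∑ z, (g x y z + g y x z + g z x y) := by
      gcongr with x _ y _ z _
      exact htriangle x y z
    _ = 3 * ∑ j, ‖resultant u j‖ ^ 2 := by
      simp only [Finset.sum_add_distrib, hswap, hrotate, hsq]
      ring

end Resultant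

lemma exists_norm_eq_one_le_real_inner_iff {E : Type*} [NormedAddCommGroup E]
    [InnerProductSpace ℝ E] {x : E} {c : ℝ} (hc : 0 < c) :
    (∃ v : E, ‖v‖ = 1 ∧ c ≤ ⟪x, v⟫) ↔ c ≤ ‖x‖ := by
  constructor
  · rintro ⟨v, hv, hcv⟩
    simpa [hv] using hcv.trans (real_inner_le_norm x v)
  · intro hcx
    have hx : x ≠ 0 := norm_pos_iff.1 (hc.trans_le hcx)
    refine ⟨‖x‖⁻¹ • x, norm_smul_inv_norm hx, ?_⟩
    rwa [real_inner_smul_right, real_inner_self_eq_norm_sq, sq,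
      inv_mul_cancel_left₀ (norm_ne_zero_iff.2 hx)]

lemma sum_le_card_filter_mul_add_card_sub_mul {ι : Type*} (s : Finset ι) (P : ι → Prop)
    [DecidablePred P] {f : ι → ℝ} {a b : ℝ} (ha : ∀ i ∈ s, P i → f i ≤ a)
    (hb : ∀ i ∈ s, ¬P i → f i ≤ b) :
    ∑ i ∈ s, f i ≤ #(s.filter P) * a + ((#s : ℝ) - #(s.filter P)) * b := by
  have hcard : ((#(s.filter (¬P ·)) : ℕ) : ℝ) = #s - #(s.filter P) := by
    rw [eq_sub_iff_add_eq', ← Nat.cast_add, card_filter_add_card_filter_not]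
  rw [← hcard, ← sum_filter_add_sum_filter_not s P]
  gcongr
  · simpa using sum_le_card_nsmul _ _ a fun i hi => ha i (mem_filter.1 hi).1 (mem_filter.1 hi).2
  · simpa using sum_le_card_nsmul _ _ b fun i hi => hb i (mem_filter.1 hi).1 (mem_filter.1 hi).2

/-- For a set `S = {u 1, …, u n} ⊂ ℝ^p` of `n ≥ 3` distinct points, there exist at
least `n/6` points `u j ∈ S` with the property that for some unit vector `v`,
`(1/n) · ∑_{i : u i ≠ u j} ⟨(u i − u j)/‖u i − u j‖, v⟩ ≥ 1/4`. -/
theorem many_good_vantage_points {p n : ℕ} (hn : 3 ≤ n)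
    (u : Fin n → EuclideanSpace ℝ (Fin p)) (hu : Function.Injective u) :
    (n : ℝ) / 6 ≤
      ({j : Fin n | ∃ v : EuclideanSpace ℝ (Fin p), ‖v‖ = 1 ∧
          (1 : ℝ) / (n : ℝ) *
              ∑ i ∈ Finset.univ.erase j, ⟪‖u i - u j‖⁻¹ • (u i - u j), v⟫ ≥ 1 / 4}.ncard
        : ℝ) := by
  have hn₀ : (0 : ℝ) < n := by positivity
  have hscale : ∀ j v, (1 : ℝ) / n * ∑ i ∈ univ.erase j, ⟪‖u i - u j‖⁻¹ • (u i - u j), v⟫ ≥ 1 / 4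
      ↔ (n : ℝ) / 4 ≤ ⟪resultant u j, v⟫ := fun j v => by
    rw [real_inner_resultant, ge_iff_le, one_div_mul_eq_div, le_div_iff₀ hn₀, div_mul_eq_mul_div,
      one_mul]
    rfl
  simp_rw [hscale, exists_norm_eq_one_le_real_inner_iff (by positivity : (0 : ℝ) < n / 4)]
  rw [Set.ncard_eq_toFinset_card', Set.toFinset_ofPred]
  have hlower := card_pow_three_sub_card_le_three_mul_sum_norm_resultant_sq hu
  have hupper := sum_le_card_filter_mul_add_card_sub_mul univ
    (fun j => (n : ℝ) / 4 ≤ ‖resultant u j‖) (f := fun j => ‖resultant u j‖ ^ 2)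
    (a := (n : ℝ) ^ 2) (b := ((n : ℝ) / 4) ^ 2)
    (fun j _ _ => pow_le_pow_left₀ (norm_nonneg _) (by simpa using norm_resultant_le u j) 2)
    (fun j _ hj => pow_le_pow_left₀ (norm_nonneg _) (not_le.1 hj).le 2)
  rw [Fintype.card_fin] at hlower
  rw [card_univ, Fintype.card_fin] at hupper
  have hn3 : (3 : ℝ) ≤ n := by exact_mod_cast hn
  by_contra! hG
  nlinarith [mul_lt_mul_of_pos_right hG (by positivity : (0 : ℝ) < n ^ 2)]
end

section
/- For every set {x_1, ..., x_n} ⊂ ℝ^p of n ≥ 2 distinct points, there exist at least n/6 points x among them with the property that for some unit vector v ∈ ℝ^p (‖v‖ = 1), (1/(n−1)) · Σ_{i : x_i ≠ x} ⟨(x_i − x)/‖x_i − x‖, v⟩ ≥ 1/4. -/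
open scoped RealInnerProductSpace
open Finset

lemma tri_units' {E : Type*} [NormedAddCommGroup E] [InnerProductSpace ℝ E]
    {u v w : E} (hu : ‖u‖ = 1) (hv : ‖v‖ = 1) (hw : ‖w‖ = 1)
    {α β γ : ℝ} (hα : 0 < α) (hβ : 0 < β) (hγ : 0 < γ)
    (hrel : α • u + β • v + γ • w = 0) :
    ⟪u,v⟫ + ⟪u,w⟫ + ⟪v,w⟫ ≤ -1 := by
  have huu : ⟪u,u⟫ = 1 := by rw [real_inner_self_eq_norm_mul_norm, hu]; ring
  have hvv : ⟪v,v⟫ = 1 := by rw [real_inner_self_eq_norm_mul_norm, hv]; ring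
  have hww : ⟪w,w⟫ = 1 := by rw [real_inner_self_eq_norm_mul_norm, hw]; ring
  have e1 : α * ⟪u,u⟫ + β * ⟪v,u⟫ + γ * ⟪w,u⟫ = 0 := by
    have := congrArg (fun z => ⟪z, u⟫) hrel
    simpa [inner_add_left, real_inner_smul_left] using this
  have e2 : α * ⟪u,v⟫ + β * ⟪v,v⟫ + γ * ⟪w,v⟫ = 0 := by
    have := congrArg (fun z => ⟪z, v⟫) hrel
    simpa [inner_add_left, real_inner_smul_left] using this
  have e3 : α * ⟪u,w⟫ + β * ⟪v,w⟫ + γ * ⟪w,w⟫ = 0 := by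
    have := congrArg (fun z => ⟪z, w⟫) hrel
    simpa [inner_add_left, real_inner_smul_left] using this
  rw [real_inner_comm u v] at e1
  rw [real_inner_comm u w] at e1
  rw [real_inner_comm v w] at e2
  have bt : |⟪u,v⟫| ≤ 1 := by
    have := abs_real_inner_le_norm u v; rwa [hu, hv, one_mul] at this
  have br : |⟪u,w⟫| ≤ 1 := by
    have := abs_real_inner_le_norm u w; rwa [hu, hw, one_mul] at this
  have bs : |⟪v,w⟫| ≤ 1 := by
    have := abs_real_inner_le_norm v w; rwa [hv, hw, one_mul] at this
  rw [abs_le] at bt br bs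
  rw [huu] at e1; rw [hvv] at e2; rw [hww] at e3
  -- γ ≤ α + β
  have hγab : γ ≤ α + β := by nlinarith [br.1, bs.1]
  nlinarith [mul_nonneg (sub_nonneg.2 hγab) (by linarith [bt.1] : (0:ℝ) ≤ 1 + ⟪u,v⟫), hγ.le]

lemma tri_points' {E : Type*} [NormedAddCommGroup E] [InnerProductSpace ℝ E]
    {a b c : E} (hab : a ≠ b) (hac : a ≠ c) (hbc : b ≠ c) :
    1 ≤ ⟪‖b - a‖⁻¹ • (b - a), ‖c - a‖⁻¹ • (c - a)⟫
      + ⟪‖a - b‖⁻¹ • (a - b), ‖c - b‖⁻¹ • (c - b)⟫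
      + ⟪‖a - c‖⁻¹ • (a - c), ‖b - c‖⁻¹ • (b - c)⟫ := by
  have hba : b - a ≠ 0 := sub_ne_zero.2 (Ne.symm hab)
  have hcb : c - b ≠ 0 := sub_ne_zero.2 (Ne.symm hbc)
  have hac' : a - c ≠ 0 := sub_ne_zero.2 hac
  have hu : ‖(‖b - a‖⁻¹ • (b - a) : E)‖ = 1 := norm_smul_inv_norm hba
  have hv : ‖(‖c - b‖⁻¹ • (c - b) : E)‖ = 1 := norm_smul_inv_norm hcb
  have hw : ‖(‖a - c‖⁻¹ • (a - c) : E)‖ = 1 := norm_smul_inv_norm hac'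
  have hrel : ‖b - a‖ • (‖b - a‖⁻¹ • (b - a)) + ‖c - b‖ • (‖c - b‖⁻¹ • (c - b))
      + ‖a - c‖ • (‖a - c‖⁻¹ • (a - c)) = 0 := by
    rw [smul_inv_smul₀ (norm_ne_zero_iff.2 hba), smul_inv_smul₀ (norm_ne_zero_iff.2 hcb),
      smul_inv_smul₀ (norm_ne_zero_iff.2 hac')]
    abel
  have key := tri_units' hu hv hw (norm_pos_iff.2 hba) (norm_pos_iff.2 hcb)
    (norm_pos_iff.2 hac') hrel
  have h1 : ‖c - a‖⁻¹ • (c - a) = -(‖a - c‖⁻¹ • (a - c) : E) := by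
    rw [← neg_sub a c, norm_neg, smul_neg]
  have h2 : ‖a - b‖⁻¹ • (a - b) = -(‖b - a‖⁻¹ • (b - a) : E) := by
    rw [← neg_sub b a, norm_neg, smul_neg]
  have h3 : ‖b - c‖⁻¹ • (b - c) = -(‖c - b‖⁻¹ • (c - b) : E) := by
    rw [← neg_sub c b, norm_neg, smul_neg]
  rw [h1, h2, h3, inner_neg_right, inner_neg_left, inner_neg_right]
  have := real_inner_comm (‖a - c‖⁻¹ • (a - c) : E) (‖c - b‖⁻¹ • (c - b) : E)
  linarith [key]

def TT' (n : ℕ) : Finset (Fin n × Fin n × Fin n) :=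
  univ.filter (fun t => t.1 ≠ t.2.1 ∧ t.1 ≠ t.2.2 ∧ t.2.1 ≠ t.2.2)

lemma sum_TT' {n : ℕ} (F : Fin n → Fin n → Fin n → ℝ) :
    ∑ t ∈ TT' n, F t.1 t.2.1 t.2.2
      = ∑ j, ∑ i ∈ univ.erase j, ∑ k ∈ (univ.erase j).erase i, F j i k := by
  have L : ∑ t ∈ TT' n, F t.1 t.2.1 t.2.2
      = ∑ j, ∑ i, ∑ k, if j ≠ i ∧ j ≠ k ∧ i ≠ k then F j i k else 0 := by
    rw [TT', Finset.sum_filter, Fintype.sum_prod_type]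
    simp only [Fintype.sum_prod_type]
  rw [L]
  refine Finset.sum_congr rfl fun j _ => ?_
  conv_rhs => rw [← Finset.filter_ne' univ j, Finset.sum_filter]
  refine Finset.sum_congr rfl fun i _ => ?_
  by_cases hij : i = j
  · subst hij; simp
  · rw [if_pos hij]
    conv_rhs => rw [← Finset.filter_ne', Finset.sum_filter, Finset.sum_filter]
    refine Finset.sum_congr rfl fun k _ => ?_
    by_cases h1 : k = j <;> by_cases h2 : k = i <;>
      simp_all [eq_comm, Ne] <;> tauto

lemma sum_swap12' {n : ℕ} (F : Fin n → Fin n → Fin n → ℝ) :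
    ∑ t ∈ TT' n, F t.2.1 t.1 t.2.2 = ∑ t ∈ TT' n, F t.1 t.2.1 t.2.2 := by
  refine Finset.sum_nbij' (fun t => (t.2.1, t.1, t.2.2)) (fun t => (t.2.1, t.1, t.2.2))
    ?_ ?_ ?_ ?_ ?_ <;>
    simp only [TT', Finset.mem_filter, Finset.mem_univ, true_and] <;>
    intro t ht <;> first | rfl | tauto

lemma sum_rot' {n : ℕ} (F : Fin n → Fin n → Fin n → ℝ) :
    ∑ t ∈ TT' n, F t.2.2 t.1 t.2.1 = ∑ t ∈ TT' n, F t.1 t.2.1 t.2.2 := by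
  refine Finset.sum_nbij' (fun t => (t.2.2, t.1, t.2.1)) (fun t => (t.2.1, t.2.2, t.1))
    ?_ ?_ ?_ ?_ ?_ <;>
    simp only [TT', Finset.mem_filter, Finset.mem_univ, true_and] <;>
    intro t ht <;> first | rfl | tauto

lemma norm_sq_sum_inner' {E : Type*} [NormedAddCommGroup E] [InnerProductSpace ℝ E]
    {ι : Type*} (s : Finset ι) (f : ι → E) :
    ‖∑ i ∈ s, f i‖^2 = ∑ i ∈ s, ∑ k ∈ s, ⟪f i, f k⟫ := by
  rw [← real_inner_self_eq_norm_sq, sum_inner]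
  exact Finset.sum_congr rfl fun i _ => inner_sum _ _ _

/-- For every set `{x 1, …, x n} ⊂ ℝ^p` of `n ≥ 2` distinct points, there exist at
least `n/6` points `x j` with the property that for some unit vector `v`,
`(1/(n−1)) · ∑_{i : x i ≠ x j} ⟨(x i − x j)/‖x i − x j‖, v⟩ ≥ 1/4`. -/
theorem many_good_vantage_points' {p n : ℕ} (hn : 2 ≤ n)
    (x : Fin n → EuclideanSpace ℝ (Fin p)) (hx : Function.Injective x) :
    (n : ℝ) / 6 ≤
      ({j : Fin n | ∃ v : EuclideanSpace ℝ (Fin p), ‖v‖ = 1 ∧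
          (1 : ℝ) / ((n : ℝ) - 1) *
              ∑ i ∈ Finset.univ.erase j, ⟪‖x i - x j‖⁻¹ • (x i - x j), v⟫ ≥ 1 / 4}.ncard
        : ℝ) := by
  have hN : (2:ℝ) ≤ (n:ℝ) := by exact_mod_cast hn
  set g : Fin n → EuclideanSpace ℝ (Fin p) := fun j => ∑ i ∈ Finset.univ.erase j, ‖x i - x j‖⁻¹ • (x i - x j)
    with hg
  -- basic facts
  have hxne : ∀ {i j : Fin n}, i ≠ j → x i - x j ≠ 0 := fun h =>
    sub_ne_zero.2 (fun e => h (hx e))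
  have hunit : ∀ {i j : Fin n}, i ≠ j → ‖(‖x i - x j‖⁻¹ • (x i - x j) : EuclideanSpace ℝ (Fin p))‖ = 1 :=
    fun h => norm_smul_inv_norm (hxne h)
  have hcard1 : ∀ j : Fin n, (univ.erase j).card = n - 1 := fun j => by
    rw [Finset.card_erase_of_mem (mem_univ j), card_univ, Fintype.card_fin]
  have hcast1 : ((n - 1 : ℕ) : ℝ) = (n:ℝ) - 1 := by
    rw [Nat.cast_sub (by omega)]; norm_num
  have hcast2 : ((n - 2 : ℕ) : ℝ) = (n:ℝ) - 2 := by
    rw [Nat.cast_sub (by omega)]; norm_num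
  -- step 1 : expansion of ‖g j‖²
  have key1 : ∀ j : Fin n, ‖g j‖^2 = ((n:ℝ) - 1)
      + ∑ i ∈ univ.erase j, ∑ k ∈ (univ.erase j).erase i,
          ⟪(‖x i - x j‖⁻¹ • (x i - x j)), ‖x k - x j‖⁻¹ • (x k - x j)⟫ := by
    intro j
    rw [hg, norm_sq_sum_inner']
    have step : ∀ i ∈ univ.erase j,
        ∑ k ∈ univ.erase j, ⟪(‖x i - x j‖⁻¹ • (x i - x j)), ‖x k - x j‖⁻¹ • (x k - x j)⟫
        = 1 + ∑ k ∈ (univ.erase j).erase i,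
            ⟪(‖x i - x j‖⁻¹ • (x i - x j)), ‖x k - x j‖⁻¹ • (x k - x j)⟫ := by
      intro i hi
      rw [← Finset.add_sum_erase _ _ hi]
      congr 1
      rw [real_inner_self_eq_norm_sq, hunit (Finset.ne_of_mem_erase hi)]
      norm_num
    rw [Finset.sum_congr rfl step, Finset.sum_add_distrib, Finset.sum_const, hcard1,
      nsmul_eq_mul, mul_one, hcast1]
  -- step 2 : the triple sum is large
  set A : ℝ := ∑ j, ∑ i ∈ univ.erase j, ∑ k ∈ (univ.erase j).erase i,
      ⟪(‖x i - x j‖⁻¹ • (x i - x j)), ‖x k - x j‖⁻¹ • (x k - x j)⟫ with hA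
  set f : Fin n → Fin n → Fin n → ℝ := fun j i k =>
      ⟪(‖x i - x j‖⁻¹ • (x i - x j)), ‖x k - x j‖⁻¹ • (x k - x j)⟫ with hf
  have hAT : A = ∑ t ∈ TT' n, f t.1 t.2.1 t.2.2 := (sum_TT' f).symm
  have hpt : ∀ t ∈ TT' n,
      (1:ℝ) ≤ f t.1 t.2.1 t.2.2 + f t.2.1 t.1 t.2.2 + f t.2.2 t.1 t.2.1 := by
    intro t ht
    rw [TT', Finset.mem_filter] at ht
    obtain ⟨-, h1, h2, h3⟩ := ht
    exact tri_points' (fun e => h1 (hx e)) (fun e => h2 (hx e)) (fun e => h3 (hx e))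
  have hTcard : ((TT' n).card : ℝ) = (n:ℝ) * (((n:ℝ) - 1) * ((n:ℝ) - 2)) := by
    have : ((TT' n).card : ℝ) = ∑ _t ∈ TT' n, (1:ℝ) := by
      rw [Finset.sum_const, nsmul_eq_mul, mul_one]
    rw [this, sum_TT' (fun _ _ _ => (1:ℝ))]
    have e1 : ∀ j : Fin n, ∑ i ∈ univ.erase j, ∑ _k ∈ (univ.erase j).erase i, (1:ℝ)
        = ((n:ℝ) - 1) * ((n:ℝ) - 2) := by
      intro j
      have e2 : ∀ i ∈ univ.erase j, ∑ _k ∈ (univ.erase j).erase i, (1:ℝ) = (n:ℝ) - 2 := by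
        intro i hi
        rw [Finset.sum_const, Finset.card_erase_of_mem hi, hcard1, nsmul_eq_mul, mul_one]
        rw [show n - 1 - 1 = n - 2 by omega, hcast2]
      rw [Finset.sum_congr rfl e2, Finset.sum_const, hcard1, nsmul_eq_mul, hcast1]
    rw [Finset.sum_congr rfl (fun j _ => e1 j), Finset.sum_const, card_univ, Fintype.card_fin,
      nsmul_eq_mul]
  have hA3 : (n:ℝ) * (((n:ℝ) - 1) * ((n:ℝ) - 2)) ≤ 3 * A := by
    have h0 : ((TT' n).card : ℝ) ≤ ∑ t ∈ TT' n,
        (f t.1 t.2.1 t.2.2 + f t.2.1 t.1 t.2.2 + f t.2.2 t.1 t.2.1) := by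
      have := Finset.sum_le_sum hpt
      rwa [Finset.sum_const, nsmul_eq_mul, mul_one] at this
    rw [Finset.sum_add_distrib, Finset.sum_add_distrib, sum_swap12' f, sum_rot' f] at h0
    rw [← hAT] at h0
    rw [← hTcard]
    linarith
  -- step 3 : the total sum of squares is large
  have hsum : (n:ℝ) * ((n:ℝ) - 1) + A = ∑ j, ‖g j‖^2 := by
    rw [Finset.sum_congr rfl (fun j _ => key1 j), Finset.sum_add_distrib, Finset.sum_const,
      card_univ, Fintype.card_fin, nsmul_eq_mul, hA]
  -- step 4 : each ‖g j‖ is at most n - 1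
  have hgle : ∀ j : Fin n, ‖g j‖ ≤ (n:ℝ) - 1 := by
    intro j
    calc ‖g j‖ ≤ ∑ i ∈ univ.erase j, ‖(‖x i - x j‖⁻¹ • (x i - x j))‖ :=
          norm_sum_le _ _
      _ = ∑ _i ∈ univ.erase j, (1:ℝ) := Finset.sum_congr rfl fun i hi => by
          rw [hunit (Finset.ne_of_mem_erase hi)]
      _ = (n:ℝ) - 1 := by rw [Finset.sum_const, hcard1, nsmul_eq_mul, mul_one, hcast1]
  -- step 5 : the good set
  set G : Finset (Fin n) := univ.filter (fun j => ((n:ℝ) - 1)/4 ≤ ‖g j‖) with hG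
  have hsplit := Finset.sum_filter_add_sum_filter_not univ
    (fun j => ((n:ℝ) - 1)/4 ≤ ‖g j‖) (fun j => ‖g j‖^2)
  have hGbound : ∑ j ∈ G, ‖g j‖^2 ≤ (G.card : ℝ) * ((n:ℝ) - 1)^2 := by
    have := Finset.sum_le_card_nsmul G (fun j => ‖g j‖^2) (((n:ℝ) - 1)^2)
      (fun j _ => pow_le_pow_left₀ (norm_nonneg _) (hgle j) 2)
    rwa [nsmul_eq_mul] at this
  set G' : Finset (Fin n) := univ.filter (fun j => ¬ (((n:ℝ) - 1)/4 ≤ ‖g j‖)) with hG'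
  have hGbound' : ∑ j ∈ G', ‖g j‖^2 ≤ (G'.card : ℝ) * (((n:ℝ) - 1)/4)^2 := by
    have := Finset.sum_le_card_nsmul G' (fun j => ‖g j‖^2) ((((n:ℝ) - 1)/4)^2)
      (fun j hj => by
        rw [hG', Finset.mem_filter] at hj
        exact pow_le_pow_left₀ (norm_nonneg _) (le_of_not_ge hj.2) 2)
    rwa [nsmul_eq_mul] at this
  have hGG' : (G.card : ℝ) + (G'.card : ℝ) = (n:ℝ) := by
    have := Finset.card_filter_add_card_filter_not
      (s := (univ : Finset (Fin n))) (p := fun j => ((n:ℝ) - 1)/4 ≤ ‖g j‖)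
    rw [card_univ, Fintype.card_fin] at this
    have h2 := congrArg (Nat.cast (R := ℝ)) this
    rwa [Nat.cast_add] at h2
  -- step 6 : count
  have hcount : (n:ℝ) / 6 ≤ (G.card : ℝ) := by
    have h1 : (n:ℝ) * ((n:ℝ) - 1) + (n:ℝ) * (((n:ℝ) - 1) * ((n:ℝ) - 2)) / 3
        ≤ (G.card : ℝ) * ((n:ℝ) - 1)^2 + (G'.card : ℝ) * (((n:ℝ) - 1)/4)^2 := by
      have := hsplit
      nlinarith [hA3, hsum, hGbound, hGbound']
    have hm0 : (0:ℝ) ≤ (G.card : ℝ) := Nat.cast_nonneg _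
    nlinarith [sq_nonneg ((n:ℝ) - 1), hGG', h1, hm0, hN]
  -- step 7 : G is contained in the good set
  refine le_trans hcount ?_
  have hsub : (↑G : Set (Fin n)) ⊆ {j : Fin n | ∃ v : EuclideanSpace ℝ (Fin p), ‖v‖ = 1 ∧
      (1 : ℝ) / ((n : ℝ) - 1) *
        ∑ i ∈ Finset.univ.erase j, ⟪(‖x i - x j‖⁻¹ • (x i - x j)), v⟫ ≥ 1 / 4} := by
    intro j hj
    rw [Finset.mem_coe, hG, Finset.mem_filter] at hj
    obtain ⟨-, hj⟩ := hj
    have hg0 : g j ≠ 0 := by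
      intro h
      rw [h, norm_zero] at hj
      linarith
    refine ⟨‖g j‖⁻¹ • g j, norm_smul_inv_norm hg0, ?_⟩
    have hsi : ∑ i ∈ Finset.univ.erase j,
        ⟪(‖x i - x j‖⁻¹ • (x i - x j)), ‖g j‖⁻¹ • g j⟫ = ⟪g j, ‖g j‖⁻¹ • g j⟫ := by
      rw [hg]
      exact (sum_inner _ _ _).symm
    rw [hsi, real_inner_smul_right, real_inner_self_eq_norm_sq]
    have hng : (0:ℝ) < ‖g j‖ := norm_pos_iff.2 hg0
    have h5 : ‖g j‖⁻¹ * ‖g j‖ ^ 2 = ‖g j‖ := by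
      rw [sq, ← mul_assoc, inv_mul_cancel₀ hng.ne', one_mul]
    rw [ge_iff_le, h5, div_mul_eq_mul_div, one_mul, le_div_iff₀ (by linarith : (0:ℝ) < (n:ℝ) - 1)]
    linarith
  have hle : (G.card : ℕ) ≤ ({j : Fin n | ∃ v : EuclideanSpace ℝ (Fin p), ‖v‖ = 1 ∧
      (1 : ℝ) / ((n : ℝ) - 1) *
        ∑ i ∈ Finset.univ.erase j, ⟪(‖x i - x j‖⁻¹ • (x i - x j)), v⟫ ≥ 1 / 4}).ncard := by
    rw [← Set.ncard_coe_finset]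
    exact Set.ncard_le_ncard hsub (Set.toFinite _)
  exact_mod_cast hle
end

section
/- Let u, y, w ∈ ℝ^p be three distinct points satisfying ‖w − u‖ ≤ ‖y − u‖ and ‖w − y‖ ≤ ‖y − u‖. Set v = (y − u)/‖y − u‖. Then ⟨(w − u)/‖w − u‖, v⟩ + ⟨(w − y)/‖w − y‖, −v⟩ ≥ 1. -/
open scoped RealInnerProductSpace

/-- **Three-point viewing inequality.** For distinct points `u, y, w ∈ ℝ^p` with
`‖w − u‖ ≤ ‖y − u‖` and `‖w − y‖ ≤ ‖y − u‖`, setting `v = (y − u)/‖y − u‖`, we have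
`⟨(w − u)/‖w − u‖, v⟩ + ⟨(w − y)/‖w − y‖, −v⟩ ≥ 1`. -/
theorem three_point_inequality {p : ℕ} (u y w : EuclideanSpace ℝ (Fin p))
    (huy : u ≠ y) (huw : u ≠ w) (hyw : y ≠ w)
    (h1 : ‖w - u‖ ≤ ‖y - u‖) (h2 : ‖w - y‖ ≤ ‖y - u‖) :
    ⟪‖w - u‖⁻¹ • (w - u), ‖y - u‖⁻¹ • (y - u)⟫ +
        ⟪‖w - y‖⁻¹ • (w - y), -(‖y - u‖⁻¹ • (y - u))⟫ ≥ 1 := by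
  have ha : (0:ℝ) < ‖w - u‖ := norm_pos_iff.mpr (sub_ne_zero.mpr (Ne.symm huw))
  have hb : (0:ℝ) < ‖w - y‖ := norm_pos_iff.mpr (sub_ne_zero.mpr (Ne.symm hyw))
  have hc : (0:ℝ) < ‖y - u‖ := norm_pos_iff.mpr (sub_ne_zero.mpr (Ne.symm huy))
  -- triangle inequality: c ≤ b + a
  have htri : ‖y - u‖ ≤ ‖w - y‖ + ‖w - u‖ := by
    calc ‖y - u‖ = ‖(y - w) + (w - u)‖ := by abel_nf
    _ ≤ ‖y - w‖ + ‖w - u‖ := norm_add_le _ _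
    _ = ‖w - y‖ + ‖w - u‖ := by rw [norm_sub_rev]
  -- law of cosines computations
  have e1 : ⟪w - u, y - u⟫ = (‖w - u‖^2 + ‖y - u‖^2 - ‖w - y‖^2) / 2 := by
    have h := @norm_sub_sq_real (EuclideanSpace ℝ (Fin p)) _ _ (w - u) (y - u)
    have h' : (w - u) - (y - u) = w - y := by abel
    rw [h'] at h
    linarith
  have e2 : ⟪w - y, y - u⟫ = (‖w - u‖^2 - ‖w - y‖^2 - ‖y - u‖^2) / 2 := by
    have h := @norm_add_sq_real (EuclideanSpace ℝ (Fin p)) _ _ (w - y) (y - u)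
    have h' : (w - y) + (y - u) = w - u := by abel
    rw [h'] at h
    linarith
  rw [inner_neg_right, real_inner_smul_left, real_inner_smul_left,
    real_inner_smul_right, real_inner_smul_right, e1, e2]
  set a := ‖w - u‖
  set b := ‖w - y‖
  set c := ‖y - u‖
  rw [ge_iff_le]
  have key : (1:ℝ) ≤ (a^2+c^2-b^2)/(2*a*c) + (b^2+c^2-a^2)/(2*b*c) := by
    rw [div_add_div _ _ (by positivity) (by positivity), le_div_iff₀ (by positivity)]
    nlinarith [mul_nonneg hc.le (mul_nonneg (mul_nonneg (sub_nonneg.mpr h1) (sub_nonneg.mpr h2)) (by positivity : (0:ℝ) ≤ a + b)),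
      mul_nonneg hc.le (mul_nonneg (sq_nonneg a) (sub_nonneg.mpr h1)),
      mul_nonneg hc.le (mul_nonneg (sq_nonneg b) (sub_nonneg.mpr h2))]
  have heq : a⁻¹ * (c⁻¹ * ((a^2+c^2-b^2)/2)) + -(b⁻¹ * (c⁻¹ * ((a^2-b^2-c^2)/2)))
      = (a^2+c^2-b^2)/(2*a*c) + (b^2+c^2-a^2)/(2*b*c) := by
    field_simp
    ring
  rw [heq]
  exact key
end

section
/- Let (a, b) ∈ ℝ² satisfy a² + b² ≤ 1 and (1 − a)² + b² ≤ 1, with (a, b) ≠ (0, 0) and (a, b) ≠ (1, 0). Then a/√(a² + b²) + (1 − a)/√((1 − a)² + b²) ≥ 1, with equality attained at (a, b) = (1/2, √3/2). -/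
/-- The planar reduction of the three-point viewing inequality: if `a² + b² ≤ 1` and
`(1 − a)² + b² ≤ 1` with `(a,b) ≠ (0,0)` and `(a,b) ≠ (1,0)`, then
`a/√(a² + b²) + (1 − a)/√((1 − a)² + b²) ≥ 1`, with equality at `(a,b) = (1/2, √3/2)`. -/
theorem planar_three_point_inequality (a b : ℝ)
    (h1 : a ^ 2 + b ^ 2 ≤ 1) (h2 : (1 - a) ^ 2 + b ^ 2 ≤ 1)
    (h3 : (a, b) ≠ ((0 : ℝ), (0 : ℝ))) (h4 : (a, b) ≠ ((1 : ℝ), (0 : ℝ))) :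
    a / Real.sqrt (a ^ 2 + b ^ 2) + (1 - a) / Real.sqrt ((1 - a) ^ 2 + b ^ 2) ≥ 1 ∧
    ((1 / 2 : ℝ) / Real.sqrt ((1 / 2 : ℝ) ^ 2 + (Real.sqrt 3 / 2) ^ 2) +
        (1 - 1 / 2 : ℝ) / Real.sqrt ((1 - 1 / 2 : ℝ) ^ 2 + (Real.sqrt 3 / 2) ^ 2) = 1) := by
  constructor
  · have ha0 : 0 ≤ a := by nlinarith [sq_nonneg b]
    have ha1 : a ≤ 1 := by nlinarith [sq_nonneg b]
    have hp1 : 0 < a ^ 2 + b ^ 2 := by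
      rcases (by simpa [Prod.ext_iff] using h3 : ¬ (a = 0 ∧ b = 0)) with h
      rcases eq_or_ne a 0 with rfl | ha
      · have hb : b ≠ 0 := fun hb => h ⟨rfl, hb⟩
        positivity
      · positivity
    have hp2 : 0 < (1 - a) ^ 2 + b ^ 2 := by
      rcases (by simpa [Prod.ext_iff] using h4 : ¬ (a = 1 ∧ b = 0)) with h
      rcases eq_or_ne a 1 with rfl | ha
      · have hb : b ≠ 0 := fun hb => h ⟨rfl, hb⟩
        positivity
      · have : 1 - a ≠ 0 := sub_ne_zero.mpr (Ne.symm ha)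
        positivity
    have hr1 : 0 < Real.sqrt (a ^ 2 + b ^ 2) := Real.sqrt_pos.mpr hp1
    have hr2 : 0 < Real.sqrt ((1 - a) ^ 2 + b ^ 2) := Real.sqrt_pos.mpr hp2
    have hs1 : Real.sqrt (a ^ 2 + b ^ 2) ≤ 1 := by
      simpa using Real.sqrt_le_sqrt h1
    have hs2 : Real.sqrt ((1 - a) ^ 2 + b ^ 2) ≤ 1 := by
      simpa using Real.sqrt_le_sqrt h2
    have t1 : a ≤ a / Real.sqrt (a ^ 2 + b ^ 2) := by
      rw [le_div_iff₀ hr1]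
      nlinarith
    have t2 : 1 - a ≤ (1 - a) / Real.sqrt ((1 - a) ^ 2 + b ^ 2) := by
      rw [le_div_iff₀ hr2]
      nlinarith
    linarith
  · have h3 : (Real.sqrt 3) ^ 2 = 3 := Real.sq_sqrt (by norm_num)
    have : ((1 / 2 : ℝ) ^ 2 + (Real.sqrt 3 / 2) ^ 2) = 1 := by
      rw [div_pow, div_pow, h3]; norm_num
    rw [show ((1 - 1/2 : ℝ) ^ 2 + (Real.sqrt 3 / 2) ^ 2) = (1/2 : ℝ) ^ 2 + (Real.sqrt 3 / 2) ^ 2 by norm_num, this]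
    simp
end

section
/- Let u_1, ..., u_n ∈ ℝ^p be n ≥ 3 distinct points and let J(u) = Σ_{1 ≤ i < j ≤ n} ‖u_i − u_j‖. Then there exist an index j ∈ {1,...,n} and a unit vector v ∈ ℝ^p such that the directional derivative of J with respect to moving u_j in direction v satisfies lim_{t → 0} (1/t) · Σ_{i ≠ j} ( ‖u_i − (u_j + t v)‖ − ‖u_i − u_j‖ ) ≤ −n/2. In particular any configuration of distinct points admits a single-point perturbation decreasing J at rate at least n/2. -/
/-!
Write `w i j = normalize (u i - u j)` and `s j = ∑ i, w i j` (the term `i = j` vanishes since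
`normalize 0 = 0`). Moving `u j` in a unit direction `v` changes `∑ i, ‖u i - u j‖` at rate
`-⟪s j, v⟫`, so `v = normalize (s j)` gives rate `-‖s j‖`, and it suffices to find `j` with
`‖s j‖ ≥ n / 2`. Expanding `∑ j, ‖s j‖ ^ 2` gives a sum over triples `(j, i, k)` of the cosine of
the angle at `u j` of the triangle `u i u j u k`. The three cosines of a triangle sum to at least
`1`, so summing over the cyclic rotations of the triples yields
`3 ∑ j, ‖s j‖ ^ 2 ≥ n (n ^ 2 - 1) ≥ 3 n ^ 3 / 4` for `n ≥ 2`.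
-/

open scoped RealInnerProductSpace Topology

section

variable {E : Type*} [NormedAddCommGroup E] [InnerProductSpace ℝ E]

theorem inner_add_inner_add_inner_le_neg_one {x y z : E} (hx : ‖x‖ = 1) (hy : ‖y‖ = 1)
    (hz : ‖z‖ = 1) {a b c : ℝ} (ha : 0 ≤ a) (hb : 0 ≤ b) (hc : 0 < c)
    (h : a • x + b • y + c • z = 0) : ⟪x, y⟫ + ⟪y, z⟫ + ⟪z, x⟫ ≤ -1 := by
  have hx' : a + b * ⟪x, y⟫ + c * ⟪z, x⟫ = 0 := by
    have := congrArg (⟪·, x⟫) h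
    simp only [inner_add_left, real_inner_smul_left, inner_zero_left,
      real_inner_self_eq_norm_sq, hx, one_pow, mul_one, real_inner_comm x y] at this
    exact this
  have hy' : a * ⟪x, y⟫ + b + c * ⟪y, z⟫ = 0 := by
    have := congrArg (⟪·, y⟫) h
    simp only [inner_add_left, real_inner_smul_left, inner_zero_left,
      real_inner_self_eq_norm_sq, hy, one_pow, mul_one, real_inner_comm y z] at this
    exact this
  have hc_le : c ≤ a + b := by
    calc c = ‖c • z‖ := by rw [norm_smul, hz, Real.norm_of_nonneg hc.le, mul_one]
      _ = ‖a • x + b • y‖ := by rw [eq_neg_of_add_eq_zero_right h, norm_neg]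
      _ ≤ ‖a • x‖ + ‖b • y‖ := norm_add_le _ _
      _ = a + b := by simp [norm_smul, hx, hy, abs_of_nonneg ha, abs_of_nonneg hb]
  have hxy : -1 ≤ ⟪x, y⟫ := by
    simpa [hx, hy] using neg_le_of_abs_le (abs_real_inner_le_norm x y)
  -- adding `hx'` and `hy'` gives `c (⟪x,y⟫ + ⟪y,z⟫ + ⟪z,x⟫ + 1) = (1 + ⟪x,y⟫) (c - a - b)`
  nlinarith [mul_nonneg (neg_le_iff_add_nonneg'.mp hxy) (sub_nonneg.mpr hc_le)]

/-- `cos A + cos B + cos C ≥ 1` for the angles of a triangle, possibly degenerate. -/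
theorem one_le_sum_inner_normalize_sub {a b c : E} (h : ¬(a = b ∧ b = c)) :
    1 ≤ ⟪NormedSpace.normalize (b - a), NormedSpace.normalize (c - a)⟫ +
      ⟪NormedSpace.normalize (c - b), NormedSpace.normalize (a - b)⟫ +
      ⟪NormedSpace.normalize (a - c), NormedSpace.normalize (b - c)⟫ := by
  have hunit : ∀ {v : E}, v ≠ 0 → ‖NormedSpace.normalize v‖ = 1 :=
    NormedSpace.norm_normalize_eq_one_iff.mpr
  by_cases hab : a = b
  · subst hab
    have hac : a - c ≠ 0 := sub_ne_zero.mpr fun hac => h ⟨rfl, hac⟩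
    simp [NormedSpace.normalize_zero_eq_zero, hunit hac]
  by_cases hbc : b = c
  · subst hbc
    simp [NormedSpace.normalize_zero_eq_zero, hunit (sub_ne_zero.mpr (Ne.symm hab))]
  by_cases hca : c = a
  · subst hca
    simp [NormedSpace.normalize_zero_eq_zero, hunit (sub_ne_zero.mpr hab)]
  have key := inner_add_inner_add_inner_le_neg_one
    (hunit (sub_ne_zero.mpr (Ne.symm hab))) (hunit (sub_ne_zero.mpr (Ne.symm hbc)))
    (hunit (sub_ne_zero.mpr (Ne.symm hca))) (norm_nonneg (b - a)) (norm_nonneg (c - b))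
    (norm_pos_iff.mpr (sub_ne_zero.mpr (Ne.symm hca)))
    (by simp only [NormedSpace.norm_smul_normalize]; abel)
  rw [← neg_sub a c, ← neg_sub b a, ← neg_sub c b]
  simp only [NormedSpace.normalize_neg, inner_neg_right]
  linarith [real_inner_comm (NormedSpace.normalize (b - a)) (NormedSpace.normalize (a - c)),
    real_inner_comm (NormedSpace.normalize (c - b)) (NormedSpace.normalize (b - a)),
    real_inner_comm (NormedSpace.normalize (a - c)) (NormedSpace.normalize (c - b))]

theorem card_mul_card_sq_sub_one_le_three_mul_sum_norm_sq {ι : Type*} [Fintype ι]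
    {u : ι → E} (hu : Function.Injective u) :
    (Fintype.card ι : ℝ) * ((Fintype.card ι : ℝ) ^ 2 - 1) ≤
      3 * ∑ j, ‖∑ i, NormedSpace.normalize (u i - u j)‖ ^ 2 := by
  classical
  set g : ι → ι → ι → ℝ := fun j i k =>
    ⟪NormedSpace.normalize (u i - u j), NormedSpace.normalize (u k - u j)⟫
  have hsq : ∀ j, ‖∑ i, NormedSpace.normalize (u i - u j)‖ ^ 2 = ∑ i, ∑ k, g j i k := by
    intro j
    simp_rw [← real_inner_self_eq_norm_sq, sum_inner, inner_sum, g]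
  have hrot : ∀ j i k, 1 - (if i = j ∧ k = j then 1 else 0) ≤ g j i k + g i k j + g k j i := by
    intro j i k
    split_ifs with hijk
    · obtain ⟨rfl, rfl⟩ := hijk
      simp [g, NormedSpace.normalize_zero_eq_zero]
    · rw [sub_zero]
      refine one_le_sum_inner_normalize_sub ?_
      rintro ⟨hji, hik⟩
      exact hijk ⟨(hu hji).symm, (hu (hji.trans hik)).symm⟩
  have hcycle₁ : ∑ j, ∑ i, ∑ k, g i k j = ∑ j, ∑ i, ∑ k, g j i k := by
    rw [Finset.sum_comm]; exact Finset.sum_congr rfl fun _ _ => Finset.sum_comm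
  have hcycle₂ : ∑ j, ∑ i, ∑ k, g k j i = ∑ j, ∑ i, ∑ k, g j i k := by
    rw [← hcycle₁, Finset.sum_comm]; exact Finset.sum_congr rfl fun _ _ => Finset.sum_comm
  have hdiag : ∑ j : ι, ∑ i : ι, ∑ k : ι, (if i = j ∧ k = j then (1 : ℝ) else 0) =
      Fintype.card ι := by
    simp [ite_and]
  calc (Fintype.card ι : ℝ) * ((Fintype.card ι : ℝ) ^ 2 - 1)
      = ∑ j : ι, ∑ i : ι, ∑ k : ι, (1 - if i = j ∧ k = j then (1 : ℝ) else 0) := by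
        simp only [Finset.sum_sub_distrib, hdiag, Finset.sum_const, Finset.card_univ,
          nsmul_eq_mul, mul_one]
        ring
    _ ≤ ∑ j, ∑ i, ∑ k, (g j i k + g i k j + g k j i) := by
        gcongr with j _ i _ k _; exact hrot j i k
    _ = 3 * ∑ j, ‖∑ i, NormedSpace.normalize (u i - u j)‖ ^ 2 := by
        simp only [Finset.sum_add_distrib, hcycle₁, hcycle₂, hsq]; ring

theorem exists_card_div_two_le_norm_sum_normalize {ι : Type*} [Fintype ι] {u : ι → E}
    (hu : Function.Injective u) (hι : 2 ≤ Fintype.card ι) :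
    ∃ j, (Fintype.card ι : ℝ) / 2 ≤ ‖∑ i, NormedSpace.normalize (u i - u j)‖ := by
  have hn : (2 : ℝ) ≤ Fintype.card ι := by exact_mod_cast hι
  have hne : (Finset.univ : Finset ι).Nonempty :=
    Finset.univ_nonempty_iff.mpr (Fintype.card_pos_iff.mp (by omega))
  obtain ⟨j, -, hj⟩ := Finset.exists_le_of_sum_le hne
    (f := fun _ => ((Fintype.card ι : ℝ) / 2) ^ 2)
    (g := fun j => ‖∑ i, NormedSpace.normalize (u i - u j)‖ ^ 2) (by
      have := card_mul_card_sq_sub_one_le_three_mul_sum_norm_sq hu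
      simp only [Finset.sum_const, Finset.card_univ, nsmul_eq_mul]
      nlinarith)
  exact ⟨j, (sq_le_sq₀ (by positivity) (norm_nonneg _)).mp hj⟩

theorem HasDerivAt.norm {f : ℝ → E} {f' : E} {x : ℝ} (hf : HasDerivAt f f' x)
    (h0 : f x ≠ 0) : HasDerivAt (fun t => ‖f t‖) ⟪NormedSpace.normalize (f x), f'⟫ x := by
  have := hf.norm_sq.sqrt (by positivity)
  simp only [Real.sqrt_sq (norm_nonneg _)] at this
  convert this using 1
  rw [NormedSpace.normalize, real_inner_smul_left]
  field_simp

theorem hasDerivAt_sum_norm_sub_add_smul {ι : Type*} {s : Finset ι} {u : ι → E} {x : E}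
    (v : E) (h : ∀ i ∈ s, u i ≠ x) :
    HasDerivAt (fun t : ℝ => ∑ i ∈ s, ‖u i - (x + t • v)‖)
      (-⟪∑ i ∈ s, NormedSpace.normalize (u i - x), v⟫) 0 := by
  have hline (i : ι) : HasDerivAt (fun t : ℝ => u i - (x + t • v)) (-v) 0 := by
    simpa using (((hasDerivAt_id (0 : ℝ)).smul_const v).const_add x).const_sub (u i)
  have := HasDerivAt.fun_sum fun i hi => (hline i).norm (by simpa [sub_eq_zero] using h i hi)
  simpa [sum_inner] using this

theorem inner_normalize_self (x : E) : ⟪x, NormedSpace.normalize x⟫ = ‖x‖ := by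
  rcases eq_or_ne x 0 with rfl | hx
  · simp
  rw [NormedSpace.normalize, real_inner_smul_right, real_inner_self_eq_norm_sq]
  field_simp

end

/-- For `n ≥ 3` distinct points `u 1, …, u n` in `ℝ^p`, there exist an index `j` and a
unit vector `v` such that the directional derivative of the sum-of-pairwise-distances
functional `J(u) = ∑_{i<j} ‖u i − u j‖`, with respect to moving `u j` in direction `v`,
is at most `−n/2`: any configuration of distinct points admits a single-point
perturbation decreasing `J` at rate at least `n/2`. -/
theorem exists_descent_direction {p n : ℕ} (hn : 3 ≤ n)
    (u : Fin n → EuclideanSpace ℝ (Fin p)) (hu : Function.Injective u) :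
    ∃ j : Fin n, ∃ v : EuclideanSpace ℝ (Fin p), ‖v‖ = 1 ∧
      ∃ D : ℝ,
        Filter.Tendsto
          (fun t : ℝ => (1 / t) *
            ∑ i ∈ Finset.univ.erase j, (‖u i - (u j + t • v)‖ - ‖u i - u j‖))
          (𝓝[≠] (0 : ℝ)) (𝓝 D) ∧
        D ≤ -(n : ℝ) / 2 := by
  obtain ⟨j, hj⟩ := exists_card_div_two_le_norm_sum_normalize hu
    (by rw [Fintype.card_fin]; omega)
  rw [Fintype.card_fin] at hj
  set s := ∑ i, NormedSpace.normalize (u i - u j)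
  have hn' : (3 : ℝ) ≤ n := by exact_mod_cast hn
  have hs : s ≠ 0 := norm_pos_iff.mp (by linarith)
  refine ⟨j, NormedSpace.normalize s, NormedSpace.norm_normalize_eq_one_iff.mpr hs, -‖s‖, ?_,
    by linarith⟩
  have hderiv := hasDerivAt_sum_norm_sub_add_smul (s := Finset.univ.erase j) (x := u j)
    (NormedSpace.normalize s) fun i hi => hu.ne (Finset.ne_of_mem_erase hi)
  rw [Finset.sum_erase _ (by simp [NormedSpace.normalize_zero_eq_zero]), inner_normalize_self]
    at hderiv
  refine (hasDerivAt_iff_tendsto_slope.mp hderiv).congr fun t => ?_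
  simp [slope_def_field, Finset.sum_sub_distrib, div_eq_inv_mul]
end

section
/- Let x_1, ..., x_n ∈ ℝ^p, let F ⊆ {1,...,n} with |F| = m ≥ 3, let 0 ≤ ε and let w_{ij} be symmetric nonnegative affinities with w_{ij} = 1 whenever i, j ∈ F with i ≠ j, and 0 ≤ w_{ij} ≤ ε whenever not both i, j lie in F. Let γ ≥ 0, set E = Σ_{i=1}^n ‖x_i − x̄‖² with x̄ the mean of the data, and let u = (u_1, ..., u_n) be a configuration with all u_i distinct and ‖u_i − x_i‖ ≤ √E for all i. Then there exist an index j ∈ F and a unit vector v ∈ ℝ^p such that the one-sided directional derivative of the convex clustering energy E_γ at u, with respect to moving u_j in direction v, is at most 2√E − γ(m/2 − ε n). -/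
open Finset
open scoped Topology

/-- The convex clustering energy
`E_γ(u) = ∑ᵢ ‖xᵢ − uᵢ‖² + γ ∑_{i<j} w i j ‖uᵢ − uⱼ‖`. -/
noncomputable def clusterEnergy {p n : ℕ} (x : Fin n → EuclideanSpace ℝ (Fin p))
    (w : Fin n → Fin n → ℝ) (γ : ℝ) (u : Fin n → EuclideanSpace ℝ (Fin p)) : ℝ :=
  ∑ i, ‖x i - u i‖ ^ 2 +
    γ * ∑ i, ∑ j ∈ univ.filter (fun j => i < j), w i j * ‖u i - u j‖

/-!
Pick two points `u j`, `u k` of the folder at maximal distance. For every other folder point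
`u i` the side `u j u k` is the longest side of the triangle, so the cosines of its two angles at
`u j` and `u k` add up to at least `1`; summing, the cosines at one of the two endpoints, say at
`u j`, add up to at least `m / 2`. Moving `u j` towards `u k` then decreases each fusion term of
the folder at rate `cos ∠ (u i) (u j) (u k)`, costs at most `ε n` through the weak affinities and
at most `2√E` through the fidelity term.
-/

open scoped RealInnerProductSpace EuclideanGeometry
open EuclideanGeometry

theorem HasDerivAt.norm_s12 {F : Type*} [NormedAddCommGroup F] [InnerProductSpace ℝ F]
    {f : ℝ → F} {f' : F} {x : ℝ} (hf : HasDerivAt f f' x) (h0 : f x ≠ 0) :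
    HasDerivAt (‖f ·‖) (⟪f x, f'⟫ / ‖f x‖) x := by
  have h := hf.norm_sq.sqrt (by positivity)
  simp only [Real.sqrt_sq (norm_nonneg _)] at h
  convert h using 1
  field_simp

theorem HasDerivAt.tendsto_div_nhdsGT_zero {f : ℝ → ℝ} {f' a : ℝ} (hf : HasDerivAt f f' 0)
    (ha : f 0 = a) : Filter.Tendsto (fun t => (f t - a) / t) (𝓝[>] 0) (𝓝 f') := by
  simpa [div_eq_inv_mul, ha] using hf.tendsto_slope_zero_right

theorem min_mem_and_max_mem_iff {α : Type*} [LinearOrder α] (p : α → Prop) (a b : α) :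
    p (min a b) ∧ p (max a b) ↔ p a ∧ p b := by
  rcases le_total a b with h | h <;> simp [h, and_comm]

theorem Finset.exists_pair_forall_dist_le {ι α : Type*} [DecidableEq ι] [PseudoMetricSpace α]
    {s : Finset ι} (hs : 1 < s.card) (f : ι → α) :
    ∃ j ∈ s, ∃ k ∈ s, j ≠ k ∧ ∀ a ∈ s, ∀ b ∈ s, dist (f a) (f b) ≤ dist (f j) (f k) := by
  obtain ⟨a, ha, b, hb, hab⟩ := one_lt_card.1 hs
  obtain ⟨⟨j, k⟩, hjk, hmax⟩ := s.offDiag.exists_max_image (fun q => dist (f q.1) (f q.2))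
    ⟨(a, b), mem_offDiag.2 ⟨ha, hb, hab⟩⟩
  obtain ⟨hj, hk, hjk⟩ := mem_offDiag.1 hjk
  refine ⟨j, hj, k, hk, hjk, fun a ha b hb => ?_⟩
  by_cases hab : a = b
  · simp [hab]
  · exact hmax (a, b) (mem_offDiag.2 ⟨ha, hb, hab⟩)

theorem Finset.sum_sum_filter_lt_eq_sum_erase {ι M : Type*} [Fintype ι] [LinearOrder ι]
    [AddCommMonoid M] (j : ι) (f : ι → ι → M) (hf : ∀ i k, i ≠ j → k ≠ j → f i k = 0) :
    ∑ i, ∑ k ∈ univ.filter (fun k => i < k), f i k =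
      ∑ i ∈ univ.erase j, f (min i j) (max i j) := by
  have hrow : ∀ i ∈ univ.erase j,
      ∑ k ∈ univ.filter (fun k => i < k), f i k = if i < j then f i j else 0 := by
    intro i hi
    have hij := ne_of_mem_erase hi
    split_ifs with h
    · exact sum_eq_single_of_mem j (by simp [h]) fun k _ hk => hf i k hij hk
    · exact sum_eq_zero fun k hk => hf i k hij fun hkj => h (hkj ▸ (mem_filter.1 hk).2)
  have hgt : univ.filter (fun k => j < k) = (univ.erase j).filter (fun i => ¬i < j) := by
    ext i
    simp only [mem_filter, mem_erase, mem_univ, true_and, and_true, not_lt]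
    exact ⟨fun h => ⟨h.ne', h.le⟩, fun h => lt_of_le_of_ne h.2 (Ne.symm h.1)⟩
  rw [← add_sum_erase _ _ (mem_univ j), sum_congr rfl hrow, ← sum_filter, hgt, add_comm,
    ← sum_filter_add_sum_filter_not (univ.erase j) (· < j)]
  congr 1
  · exact sum_congr rfl fun i hi => by
      have h := (mem_filter.1 hi).2
      rw [min_eq_left h.le, max_eq_right h.le]
  · exact sum_congr rfl fun i hi => by
      have h := not_lt.1 (mem_filter.1 hi).2
      rw [min_eq_right h, max_eq_left h]

theorem Finset.sum_erase_mul_le_sum_add {ι : Type*} [Fintype ι] [DecidableEq ι] {F : Finset ι}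
    {j : ι} {c g : ι → ℝ} {ε : ℝ} (hε : 0 ≤ ε) (hcF : ∀ i ∈ F.erase j, c i = 1)
    (hc : ∀ i ∉ F, 0 ≤ c i ∧ c i ≤ ε) (hg : ∀ i, g i ≤ 1) :
    ∑ i ∈ univ.erase j, c i * g i ≤ ∑ i ∈ F.erase j, g i + ε * Fintype.card ι := by
  have hsub : F.erase j ⊆ univ.erase j := erase_subset_erase j (subset_univ F)
  have hout : ∀ i ∈ univ.erase j \ F.erase j, c i * g i ≤ ε := fun i hi => by
    obtain ⟨hij, -⟩ := mem_erase.1 (mem_sdiff.1 hi).1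
    have hiF : i ∉ F := fun h => (mem_sdiff.1 hi).2 (mem_erase.2 ⟨hij, h⟩)
    calc c i * g i ≤ c i * 1 := mul_le_mul_of_nonneg_left (hg i) (hc i hiF).1
      _ ≤ ε := by simpa using (hc i hiF).2
  rw [← sum_sdiff hsub, add_comm, sum_congr rfl fun i hi => by rw [hcF i hi, one_mul]]
  gcongr
  calc ∑ i ∈ univ.erase j \ F.erase j, c i * g i ≤ (univ.erase j \ F.erase j).card • ε :=
        sum_le_card_nsmul _ _ _ hout
    _ ≤ ε * Fintype.card ι := by
        rw [nsmul_eq_mul, mul_comm]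
        gcongr
        exact_mod_cast card_le_univ _

namespace EuclideanGeometry

variable {V P : Type*} [NormedAddCommGroup V] [InnerProductSpace ℝ V] [MetricSpace P]
  [NormedAddTorsor V P]

theorem one_le_cos_angle_add_cos_angle {a b c : P} (hca : c ≠ a) (hcb : c ≠ b)
    (hc_a : dist c a ≤ dist a b) (hc_b : dist c b ≤ dist a b) :
    1 ≤ Real.cos (∠ c a b) + Real.cos (∠ c b a) := by
  have hA := law_cos c a b
  have hB := law_cos c b a
  rw [dist_comm b a] at hA
  set d := dist a b
  set r := dist c a
  set s := dist c b
  have hr : 0 < r := dist_pos.2 hca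
  have hs : 0 < s := dist_pos.2 hcb
  have hd : 0 < d := hr.trans_le hc_a
  -- `s (r² + d² - s²) + r (s² + d² - r²) - 2 r s d = (d - r)(d - s)(r + s) + r²(d - r) + s²(d - s)`
  have key : 2 * r * s * d ≤ s * (r ^ 2 + d ^ 2 - s ^ 2) + r * (s ^ 2 + d ^ 2 - r ^ 2) := by
    nlinarith [mul_nonneg (mul_nonneg (sub_nonneg.2 hc_a) (sub_nonneg.2 hc_b)) (add_pos hr hs).le,
      mul_nonneg (sq_nonneg r) (sub_nonneg.2 hc_a), mul_nonneg (sq_nonneg s) (sub_nonneg.2 hc_b)]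
  have hcos : 2 * r * s * d * (Real.cos (∠ c a b) + Real.cos (∠ c b a)) =
      s * (r ^ 2 + d ^ 2 - s ^ 2) + r * (s ^ 2 + d ^ 2 - r ^ 2) := by
    linear_combination s * hA + r * hB
  refine le_of_mul_le_mul_left ?_ (by positivity : 0 < 2 * r * s * d)
  linarith

theorem card_le_sum_cos_angle_add_sum_cos_angle {ι : Type*} [DecidableEq ι] {u : ι → P}
    (hu : Function.Injective u) {F : Finset ι} {j k : ι} (hj : j ∈ F) (hk : k ∈ F) (hjk : j ≠ k)
    (hmax : ∀ a ∈ F, ∀ b ∈ F, dist (u a) (u b) ≤ dist (u j) (u k)) :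
    (F.card : ℝ) ≤ ∑ i ∈ F.erase j, Real.cos (∠ (u i) (u j) (u k)) +
      ∑ i ∈ F.erase k, Real.cos (∠ (u i) (u k) (u j)) := by
  have hkj : k ∈ F.erase j := mem_erase.2 ⟨hjk.symm, hk⟩
  have hjk' : j ∈ F.erase k := mem_erase.2 ⟨hjk, hj⟩
  rw [← sum_erase_add _ _ hkj, ← sum_erase_add _ _ hjk', erase_right_comm (a := k) (b := j),
    angle_self_of_ne (hu.ne hjk.symm), angle_self_of_ne (hu.ne hjk), Real.cos_zero]
  set T := (F.erase j).erase k
  have hT : (T.card : ℝ) = F.card - 2 := by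
    have h2 : 1 < F.card := one_lt_card.2 ⟨j, hj, k, hk, hjk⟩
    rw [card_erase_of_mem hkj, card_erase_of_mem hj, Nat.sub_sub, Nat.cast_sub (by omega)]
    norm_num
  have htriangle : ∀ i ∈ T,
      1 ≤ Real.cos (∠ (u i) (u j) (u k)) + Real.cos (∠ (u i) (u k) (u j)) := fun i hi => by
    obtain ⟨hik, hi'⟩ := mem_erase.1 hi
    obtain ⟨hij, hiF⟩ := mem_erase.1 hi'
    exact one_le_cos_angle_add_cos_angle (hu.ne hij) (hu.ne hik)
      ((hmax i hiF j hj).trans (hmax j hj k hk)) ((hmax i hiF k hk).trans (hmax j hj k hk))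
  have hsum := card_nsmul_le_sum T _ 1 htriangle
  rw [nsmul_one, sum_add_distrib, hT] at hsum
  linarith

theorem exists_half_card_le_sum_cos_angle {ι : Type*} [DecidableEq ι] {u : ι → P}
    (hu : Function.Injective u) {F : Finset ι} (hF : 1 < F.card) :
    ∃ j ∈ F, ∃ k, j ≠ k ∧
      (F.card : ℝ) / 2 ≤ ∑ i ∈ F.erase j, Real.cos (∠ (u i) (u j) (u k)) := by
  obtain ⟨j, hj, k, hk, hjk, hmax⟩ := F.exists_pair_forall_dist_le hF u
  have hsum := card_le_sum_cos_angle_add_sum_cos_angle hu hj hk hjk hmax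
  by_cases h : (F.card : ℝ) / 2 ≤ ∑ i ∈ F.erase j, Real.cos (∠ (u i) (u j) (u k))
  · exact ⟨j, hj, k, hjk, h⟩
  · exact ⟨k, hk, j, hjk.symm, by linarith⟩

end EuclideanGeometry

theorem inner_div_norm_eq_neg_cos_angle {V : Type*} [NormedAddCommGroup V]
    [InnerProductSpace ℝ V] (a b c : V) :
    ⟪b - a, ‖c - b‖⁻¹ • (c - b)⟫ / ‖b - a‖ = -Real.cos (∠ a b c) := by
  rw [EuclideanGeometry.angle, vsub_eq_sub, vsub_eq_sub, InnerProductGeometry.cos_angle,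
    real_inner_smul_right, ← neg_sub a b, inner_neg_left, norm_neg]
  ring

section ClusterEnergy

variable {E ι : Type*} [NormedAddCommGroup E] [InnerProductSpace ℝ E] [DecidableEq ι]

theorem hasDerivAt_update_add_smul_apply (u : ι → E) (j : ι) (v : E) (i : ι) :
    HasDerivAt (fun t : ℝ => Function.update u j (u j + t • v) i)
      ((Pi.single j v : ι → E) i) 0 := by
  by_cases h : i = j
  · subst h
    simpa using ((hasDerivAt_id (0 : ℝ)).smul_const v).const_add (u i)
  · simpa [Function.update_of_ne h, h] using hasDerivAt_const (0 : ℝ) (u i)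

theorem hasDerivAt_norm_sub_update_add_smul {u : ι → E} {j : ι} (hu : ∀ i, i ≠ j → u i ≠ u j)
    (v : E) {i k : ι} (hik : i ≠ k) :
    HasDerivAt
      (fun t : ℝ => ‖Function.update u j (u j + t • v) i - Function.update u j (u j + t • v) k‖)
      (⟪u i - u k, (Pi.single j v : ι → E) i - (Pi.single j v : ι → E) k⟫ / ‖u i - u k‖) 0 := by
  by_cases h : i = j ∨ k = j
  · have hne : u i - u k ≠ 0 := by
      rcases h with rfl | rfl
      exacts [sub_ne_zero.2 (hu k hik.symm).symm, sub_ne_zero.2 (hu i hik)]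
    simpa using ((hasDerivAt_update_add_smul_apply u j v i).sub
      (hasDerivAt_update_add_smul_apply u j v k)).norm_s12 (by simpa using hne)
  · rw [not_or] at h
    simpa [Function.update_of_ne h.1, Function.update_of_ne h.2, h.1, h.2] using
      hasDerivAt_const (0 : ℝ) ‖u i - u k‖

/-- Only pairs `i < j` occur in `clusterEnergy`, so the pair `{i, j}` carries the weight
`w (min i j) (max i j)`. -/
theorem hasDerivAt_clusterEnergy_update {p n : ℕ} (x : Fin n → EuclideanSpace ℝ (Fin p))
    (w : Fin n → Fin n → ℝ) (γ : ℝ) {u : Fin n → EuclideanSpace ℝ (Fin p)} {j : Fin n}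
    (hu : ∀ i, i ≠ j → u i ≠ u j) (v : EuclideanSpace ℝ (Fin p)) :
    HasDerivAt (fun t : ℝ => clusterEnergy x w γ (Function.update u j (u j + t • v)))
      (2 * ⟪u j - x j, v⟫ +
        γ * ∑ i ∈ univ.erase j, w (min i j) (max i j) * (⟪u j - u i, v⟫ / ‖u j - u i‖)) 0 := by
  have hfid := HasDerivAt.fun_sum (u := univ) fun i _ =>
    ((hasDerivAt_update_add_smul_apply u j v i).const_sub (x i)).norm_sq
  have hfus := HasDerivAt.fun_sum (u := univ) fun i _ =>
    HasDerivAt.fun_sum (u := univ.filter fun k => i < k) fun k hk =>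
      (hasDerivAt_norm_sub_update_add_smul hu v (mem_filter.1 hk).2.ne).const_mul (w i k)
  refine (hfid.add (hfus.const_mul γ)).congr_deriv (congrArg₂ _ ?_ ?_)
  · rw [sum_eq_single j (fun i _ hij => by simp [hij]) (by simp)]
    simp only [zero_smul, add_zero, Function.update_eq_self, Pi.single_eq_same, inner_neg_right,
      ← inner_neg_left, neg_sub]
  · rw [Finset.sum_sum_filter_lt_eq_sum_erase j _ fun i k hij hkj => by simp [hij, hkj]]
    refine congrArg _ (sum_congr rfl fun i hi => ?_)
    rcases lt_or_gt_of_ne (ne_of_mem_erase hi) with h | h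
    · rw [min_eq_left h.le, max_eq_right h.le, Pi.single_eq_of_ne h.ne, Pi.single_eq_same,
        zero_sub, inner_neg_right, ← inner_neg_left, neg_sub, norm_sub_rev]
    · rw [min_eq_right h.le, max_eq_left h.le, Pi.single_eq_same, Pi.single_eq_of_ne h.ne',
        sub_zero]

end ClusterEnergy

theorem descent_direction_within_folder_general {p n : ℕ}
    (x : Fin n → EuclideanSpace ℝ (Fin p))
    (F : Finset (Fin n)) (m : ℕ) (hmF : F.card = m) (hm : 3 ≤ m)
    (ε : ℝ) (hε : 0 ≤ ε)
    (w : Fin n → Fin n → ℝ) (hw0 : ∀ i j, 0 ≤ w i j)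
    (hwF : ∀ i ∈ F, ∀ j ∈ F, i ≠ j → w i j = 1)
    (hwout : ∀ i j, ¬(i ∈ F ∧ j ∈ F) → w i j ≤ ε)
    (γ : ℝ) (hγ : 0 ≤ γ)
    (u : Fin n → EuclideanSpace ℝ (Fin p)) (hu : Function.Injective u)
    (hubd : ∀ i, ‖u i - x i‖ ≤ Real.sqrt (∑ i, ‖x i - (n : ℝ)⁻¹ • ∑ k, x k‖ ^ 2)) :
    ∃ j ∈ F, ∃ v : EuclideanSpace ℝ (Fin p), ‖v‖ = 1 ∧
      ∃ D : ℝ,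
        Filter.Tendsto
          (fun t : ℝ =>
            (clusterEnergy x w γ (Function.update u j (u j + t • v)) -
              clusterEnergy x w γ u) / t)
          (𝓝[>] (0 : ℝ)) (𝓝 D) ∧
        D ≤ 2 * Real.sqrt (∑ i, ‖x i - (n : ℝ)⁻¹ • ∑ k, x k‖ ^ 2) -
              γ * ((m : ℝ) / 2 - ε * n) := by
  obtain ⟨j, hj, k, hjk, hcos⟩ := exists_half_card_le_sum_cos_angle hu (by omega : 1 < F.card)
  set v := ‖u k - u j‖⁻¹ • (u k - u j)
  have hv : ‖v‖ = 1 := norm_smul_inv_norm (sub_ne_zero.2 (hu.ne hjk.symm))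
  have hderiv := hasDerivAt_clusterEnergy_update x w γ (j := j) (fun i hi => hu.ne hi) v
  refine ⟨j, hj, v, hv, _, hderiv.tendsto_div_nhdsGT_zero (by simp), ?_⟩
  have hfid : ⟪u j - x j, v⟫ ≤ ‖u j - x j‖ := by simpa [hv] using real_inner_le_norm (u j - x j) v
  have hangle : ∑ i ∈ F.erase j, ⟪u j - u i, v⟫ / ‖u j - u i‖ =
      -∑ i ∈ F.erase j, Real.cos (∠ (u i) (u j) (u k)) := by
    rw [← sum_neg_distrib]
    exact sum_congr rfl fun i _ => inner_div_norm_eq_neg_cos_angle _ _ _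
  have hin : ∀ i ∈ F.erase j, w (min i j) (max i j) = 1 := fun i hi => by
    obtain ⟨hmin, hmax⟩ := (min_mem_and_max_mem_iff (· ∈ F) i j).2 ⟨(mem_erase.1 hi).2, hj⟩
    exact hwF _ hmin _ hmax (min_lt_max.2 (ne_of_mem_erase hi)).ne
  have hout : ∀ i ∉ F, 0 ≤ w (min i j) (max i j) ∧ w (min i j) (max i j) ≤ ε := fun i hi =>
    ⟨hw0 _ _, hwout _ _ fun h => hi ((min_mem_and_max_mem_iff (· ∈ F) i j).1 h).1⟩
  have hfus := sum_erase_mul_le_sum_add hε hin hout fun i =>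
    div_le_one_of_le₀ (by simpa [hv] using real_inner_le_norm (u j - u i) v) (norm_nonneg _)
  rw [hangle, Fintype.card_fin] at hfus
  rw [hmF] at hcos
  nlinarith [hubd j, mul_le_mul_of_nonneg_left hfus hγ, mul_le_mul_of_nonneg_left hcos hγ]

/-- If the affinities are `1` within a folder `F` of size `m ≥ 3` and at most `ε`
outside, then for any configuration `u` of distinct centroids with
`‖uᵢ − xᵢ‖ ≤ √E` for all `i`, there is an index `j ∈ F` and a unit vector `v` such
that the one-sided directional derivative of the convex clustering energy at `u`,
with respect to moving `u j` in direction `v`, is at most `2√E − γ(m/2 − εn)`. -/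
theorem descent_direction_within_folder {p n : ℕ}
    (x : Fin n → EuclideanSpace ℝ (Fin p))
    (F : Finset (Fin n)) (m : ℕ) (hmF : F.card = m) (hm : 3 ≤ m)
    (ε : ℝ) (hε : 0 ≤ ε)
    (w : Fin n → Fin n → ℝ) (hw0 : ∀ i j, 0 ≤ w i j) (hwsym : ∀ i j, w i j = w j i)
    (hwF : ∀ i ∈ F, ∀ j ∈ F, i ≠ j → w i j = 1)
    (hwout : ∀ i j, ¬(i ∈ F ∧ j ∈ F) → w i j ≤ ε)
    (γ : ℝ) (hγ : 0 ≤ γ)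
    (u : Fin n → EuclideanSpace ℝ (Fin p)) (hu : Function.Injective u)
    (hubd : ∀ i, ‖u i - x i‖ ≤ Real.sqrt (∑ i, ‖x i - (n : ℝ)⁻¹ • ∑ k, x k‖ ^ 2)) :
    ∃ j ∈ F, ∃ v : EuclideanSpace ℝ (Fin p), ‖v‖ = 1 ∧
      ∃ D : ℝ,
        Filter.Tendsto
          (fun t : ℝ =>
            (clusterEnergy x w γ (Function.update u j (u j + t • v)) -
              clusterEnergy x w γ u) / t)
          (𝓝[>] (0 : ℝ)) (𝓝 D) ∧
        D ≤ 2 * Real.sqrt (∑ i, ‖x i - (n : ℝ)⁻¹ • ∑ k, x k‖ ^ 2) -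
              γ * ((m : ℝ) / 2 - ε * n) :=
  descent_direction_within_folder_general x F m hmF hm ε hε w hw0 hwF hwout γ hγ u hu hubd
end

section
/- Let x_1, ..., x_n ∈ ℝ^p with n ≥ 3, let w_{ij} = 1 for all pairs i ≠ j (unit affinities), and let E = Σ_{i=1}^n ‖x_i − x̄‖² where x̄ = (1/n) Σ_{i=1}^n x_i. Then for every γ ≥ 8√E/n, every minimizer u = (u_1, ..., u_n) of the convex clustering energy E_γ satisfies u_1 = u_2 = ⋯ = u_n = x̄. -/
/-!
Write `v i = x̄ + d i`. Expanding the squares, `E_γ(v)` equals the energy of the fused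
configuration `x̄` plus `∑ ‖d i‖²`, minus the cross term `2 ∑ ⟪x i - x̄, d i⟫`, plus `γ` times
the fusion penalty. Because `∑ (x i - x̄) = 0`, the cross term is
`(2/n) ∑ᵢ ∑ⱼ ⟪x i - x̄, v i - v j⟫`, which Cauchy–Schwarz and `‖x i - x̄‖ ≤ √E` bound by
`(4√E/n)` times the penalty. Hence for `γ ≥ 4√E/n`,
`E_γ(v) ≥ E_γ(x̄, …, x̄) + ∑ ‖v i - x̄‖²`, and a minimizer must be the fused configuration.
-/

open Finset

open RealInnerProductSpace

theorem sum_sum_eq_two_nsmul_sum_filter_lt {ι M : Type*} [Fintype ι] [LinearOrder ι]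
    [AddCommMonoid M] (f : ι → ι → M) (hsymm : ∀ i j, f i j = f j i) (hdiag : ∀ i, f i i = 0) :
    ∑ i, ∑ j, f i j = 2 • ∑ i, ∑ j ∈ univ.filter (i < ·), f i j := by
  have hsplit : ∀ i j, f i j = (if i < j then f i j else 0) + (if j < i then f j i else 0) := by
    intro i j
    rcases lt_trichotomy i j with h | rfl | h
    · simp [h, h.not_gt]
    · simp [hdiag]
    · simp [h, h.not_gt, hsymm i j]
  calc ∑ i, ∑ j, f i j
      = ∑ i, ∑ j, (if i < j then f i j else 0) + ∑ i, ∑ j, (if j < i then f j i else 0) := by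
        rw [← sum_add_distrib]
        refine sum_congr rfl fun i _ => ?_
        rw [← sum_add_distrib]
        exact sum_congr rfl fun j _ => hsplit i j
    _ = 2 • ∑ i, ∑ j ∈ univ.filter (i < ·), f i j := by
        rw [sum_comm (f := fun i j => if j < i then f j i else 0), two_nsmul]
        simp only [sum_filter]

theorem sum_sub_card_inv_smul_sum_eq_zero {ι E : Type*} [Fintype ι] [AddCommGroup E]
    [Module ℝ E] (x : ι → E) : ∑ i, (x i - (Fintype.card ι : ℝ)⁻¹ • ∑ k, x k) = 0 := by
  rcases isEmpty_or_nonempty ι with _ | _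
  · simp
  rw [sum_sub_distrib, sum_const, card_univ, ← Nat.cast_smul_eq_nsmul ℝ, smul_smul,
    mul_inv_cancel₀ (by positivity), one_smul, sub_self]

theorem card_mul_sum_inner_eq_sum_sum_inner_sub {ι E : Type*} [Fintype ι]
    [NormedAddCommGroup E] [InnerProductSpace ℝ E] {y : ι → E} (hy : ∑ i, y i = 0) (d : ι → E) :
    (Fintype.card ι : ℝ) * ∑ i, ⟪y i, d i⟫ = ∑ i, ∑ j, ⟪y i, d i - d j⟫ := by
  have hcross : ∑ i, ∑ j, ⟪y i, d j⟫ = 0 := by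
    simp_rw [← inner_sum, ← sum_inner, hy, inner_zero_left]
  simp_rw [inner_sub_right, sum_sub_distrib, hcross, sub_zero, sum_const, card_univ,
    nsmul_eq_mul, mul_sum]

theorem clusterEnergy_const {p n : ℕ} (x : Fin n → EuclideanSpace ℝ (Fin p))
    (w : Fin n → Fin n → ℝ) (γ : ℝ) (a : EuclideanSpace ℝ (Fin p)) :
    clusterEnergy x w γ (fun _ => a) = ∑ i, ‖x i - a‖ ^ 2 := by
  simp [clusterEnergy]

theorem clusterEnergy_mean_add_sum_sq_le {p n : ℕ} (x : Fin n → EuclideanSpace ℝ (Fin p))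
    {γ : ℝ} (hγ : 4 * √(∑ i, ‖x i - (n : ℝ)⁻¹ • ∑ k, x k‖ ^ 2) / n ≤ γ)
    (v : Fin n → EuclideanSpace ℝ (Fin p)) :
    clusterEnergy x (fun _ _ => 1) γ (fun _ => (n : ℝ)⁻¹ • ∑ k, x k)
      + ∑ i, ‖v i - (n : ℝ)⁻¹ • ∑ k, x k‖ ^ 2 ≤ clusterEnergy x (fun _ _ => 1) γ v := by
  rcases n.eq_zero_or_pos with rfl | hn
  · simp [clusterEnergy]
  set c := (n : ℝ)⁻¹ • ∑ k, x k
  set s := √(∑ i, ‖x i - c‖ ^ 2)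
  set P := ∑ i, ∑ j ∈ univ.filter (i < ·), ‖v i - v j‖
  have hy : ∑ i, (x i - c) = 0 := by simpa using sum_sub_card_inv_smul_sum_eq_zero x
  have hs : ∀ i, ‖x i - c‖ ≤ s := fun i => Real.le_sqrt_of_sq_le <|
    single_le_sum (f := fun i => ‖x i - c‖ ^ 2) (fun _ _ => by positivity) (mem_univ i)
  have hcross : (n : ℝ) * ∑ i, ⟪x i - c, v i - c⟫ ≤ 2 * s * P := calc
    (n : ℝ) * ∑ i, ⟪x i - c, v i - c⟫ = ∑ i, ∑ j, ⟪x i - c, v i - v j⟫ := by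
        simpa using card_mul_sum_inner_eq_sum_sum_inner_sub hy (fun i => v i - c)
    _ ≤ ∑ i, ∑ j, s * ‖v i - v j‖ := sum_le_sum fun i _ => sum_le_sum fun j _ =>
        (real_inner_le_norm _ _).trans (mul_le_mul_of_nonneg_right (hs i) (norm_nonneg _))
    _ = 2 * s * P := by
        simp_rw [← mul_sum]
        rw [sum_sum_eq_two_nsmul_sum_filter_lt _ (fun i j => norm_sub_rev _ _) (by simp),
          nsmul_eq_mul]
        push_cast; ring
  have hP : 0 ≤ P := sum_nonneg fun _ _ => sum_nonneg fun _ _ => norm_nonneg _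
  have hcross_le_penalty : 2 * ∑ i, ⟪x i - c, v i - c⟫ ≤ γ * P := by
    refine le_trans ?_ (mul_le_mul_of_nonneg_right hγ hP)
    rw [div_mul_eq_mul_div, le_div_iff₀ (by exact_mod_cast hn)]
    linarith
  have hexpand : ∀ i, ‖x i - v i‖ ^ 2
      = ‖x i - c‖ ^ 2 - 2 * ⟪x i - c, v i - c⟫ + ‖v i - c‖ ^ 2 := fun i => by
    rw [← norm_sub_sq_real, sub_sub_sub_cancel_right]
  have hE : clusterEnergy x (fun _ _ => 1) γ v = ∑ i, ‖x i - c‖ ^ 2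
      - 2 * ∑ i, ⟪x i - c, v i - c⟫ + ∑ i, ‖v i - c‖ ^ 2 + γ * P := by
    simp only [clusterEnergy, one_mul, hexpand, sum_add_distrib, sum_sub_distrib, mul_sum, P]
  rw [clusterEnergy_const, hE]
  linarith

theorem unit_affinities_fuse_at_mean_general {p n : ℕ}
    (x : Fin n → EuclideanSpace ℝ (Fin p))
    (γ : ℝ)
    (hγ : 8 * Real.sqrt (∑ i, ‖x i - (n : ℝ)⁻¹ • ∑ k, x k‖ ^ 2) / (n : ℝ) ≤ γ)
    (u : Fin n → EuclideanSpace ℝ (Fin p))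
    (hmin : ∀ u' : Fin n → EuclideanSpace ℝ (Fin p),
      clusterEnergy x (fun _ _ => 1) γ u ≤ clusterEnergy x (fun _ _ => 1) γ u') :
    ∀ i, u i = (n : ℝ)⁻¹ • ∑ k, x k := by
  set c := (n : ℝ)⁻¹ • ∑ k, x k
  have hγ' : 4 * √(∑ i, ‖x i - c‖ ^ 2) / n ≤ γ :=
    (div_le_div_of_nonneg_right (by linarith [Real.sqrt_nonneg (∑ i, ‖x i - c‖ ^ 2)])
      n.cast_nonneg).trans hγ
  have hsq : ∑ i, ‖u i - c‖ ^ 2 ≤ 0 := by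
    linarith [clusterEnergy_mean_add_sum_sq_le x hγ' u, hmin fun _ => c]
  intro i
  have hi := (sum_eq_zero_iff_of_nonneg fun j _ => sq_nonneg ‖u j - c‖).mp
    (hsq.antisymm (sum_nonneg fun _ _ => sq_nonneg _)) i (mem_univ i)
  simpa [sub_eq_zero] using hi

/-- With unit affinities (`w i j = 1` for all `i ≠ j`) and `n ≥ 3` data points,
for every `γ ≥ 8√E/n`, where `E = ∑ᵢ ‖xᵢ − x̄‖²`, every minimizer of the convex
clustering energy has all of its centroids fused at the grand mean `x̄`. -/
theorem unit_affinities_fuse_at_mean {p n : ℕ} (hn : 3 ≤ n)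
    (x : Fin n → EuclideanSpace ℝ (Fin p))
    (γ : ℝ)
    (hγ : 8 * Real.sqrt (∑ i, ‖x i - (n : ℝ)⁻¹ • ∑ k, x k‖ ^ 2) / (n : ℝ) ≤ γ)
    (u : Fin n → EuclideanSpace ℝ (Fin p))
    (hmin : ∀ u' : Fin n → EuclideanSpace ℝ (Fin p),
      clusterEnergy x (fun _ _ => 1) γ u ≤ clusterEnergy x (fun _ _ => 1) γ u') :
    ∀ i, u i = (n : ℝ)⁻¹ • ∑ k, x k :=
  unit_affinities_fuse_at_mean_general x γ hγ u hmin
end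

section
/- Let x_1, ..., x_n ∈ ℝ^p, let F ⊆ {1,...,n} with |F| = m ≥ 3, let ε ≥ 0 satisfy ε n < m/2, and let w_{ij} be symmetric nonnegative affinities with w_{ij} = 1 whenever i, j ∈ F with i ≠ j, and 0 ≤ w_{ij} ≤ ε whenever not both i, j lie in F. Set E = Σ_{i=1}^n ‖x_i − x̄‖² with x̄ the mean of the data. Then for every γ > 2√E/(m/2 − ε n), every minimizer u = (u_1, ..., u_n) of the convex clustering energy E_γ satisfies u_i = u_j for all i, j ∈ F; that is, all centroids belonging to the folder F are fused into a single point. -/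
/-!
Compare a minimizer `u` with the competitor that moves every centroid of the folder `F` to
their mean `c`, and let `S = ∑_{i ∈ F} ‖uᵢ - c‖`. Since the deviations `uᵢ - c` sum to zero,
the fidelity term grows by at most `2 √E S`. Every within-folder penalty term disappears, and
these terms add up to at least `(m / 2) S`, while the affinities outside the folder are at most
`ε`, so the remaining penalty grows by at most `ε n S`. The energy therefore changes by at most
`(2 √E - γ (m / 2 - ε n)) S`, a negative multiple of `S` for `γ` above the threshold, so
minimality forces `S = 0`.
-/

open Finset

section Mean

variable {ι E : Type*} (s : Finset ι) (u : ι → E)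

theorem sum_sub_mean_eq_zero [AddCommGroup E] [Module ℝ E] :
    ∑ i ∈ s, (u i - (#s : ℝ)⁻¹ • ∑ j ∈ s, u j) = 0 := by
  rcases s.eq_empty_or_nonempty with rfl | hs
  · simp
  rw [sum_sub_distrib, sum_const, ← Nat.cast_smul_eq_nsmul ℝ, smul_smul,
    mul_inv_cancel₀ (by simp [hs.ne_empty]), one_smul, sub_self]

theorem card_mul_sum_norm_sub_mean_le [SeminormedAddCommGroup E] [NormedSpace ℝ E] :
    (#s : ℝ) * ∑ i ∈ s, ‖u i - (#s : ℝ)⁻¹ • ∑ j ∈ s, u j‖ ≤ ∑ i ∈ s, ∑ j ∈ s, ‖u i - u j‖ := by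
  set c := (#s : ℝ)⁻¹ • ∑ j ∈ s, u j
  rw [mul_sum]
  refine sum_le_sum fun i _ => ?_
  have hdev : ∑ j ∈ s, (u i - u j) = (#s : ℝ) • (u i - c) := by
    calc ∑ j ∈ s, (u i - u j) = ∑ j ∈ s, ((u i - c) - (u j - c)) :=
          sum_congr rfl fun j _ => by abel
      _ = (#s : ℝ) • (u i - c) := by
          rw [sum_sub_distrib, sum_sub_mean_eq_zero, sub_zero, sum_const,
            Nat.cast_smul_eq_nsmul]
  calc (#s : ℝ) * ‖u i - c‖ = ‖∑ j ∈ s, (u i - u j)‖ := by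
        rw [hdev, norm_smul, Real.norm_natCast]
    _ ≤ ∑ j ∈ s, ‖u i - u j‖ := norm_sum_le _ _

end Mean

section Quadratic

open RealInnerProductSpace

variable {ι E : Type*} [NormedAddCommGroup E] [InnerProductSpace ℝ E]

theorem norm_sub_sq_le_add_inner (x u c e : E) :
    ‖x - c‖ ^ 2 ≤ ‖x - u‖ ^ 2 + 2 * ‖x - e‖ * ‖u - c‖ + 2 * ⟪e - c, u - c⟫ := by
  have hexp : ‖x - c‖ ^ 2 = ‖x - u‖ ^ 2 + 2 * ⟪x - e, u - c⟫ + 2 * ⟪e - c, u - c⟫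
      - ‖u - c‖ ^ 2 := by
    have hsplit : ⟪x - e, u - c⟫ + ⟪e - c, u - c⟫ = ⟪x - u, u - c⟫ + ‖u - c‖ ^ 2 := by
      rw [← inner_add_left, ← real_inner_self_eq_norm_sq, ← inner_add_left]
      congr 1; abel
    rw [show x - c = (x - u) + (u - c) by abel, norm_add_sq_real]
    linarith
  nlinarith [real_inner_le_norm (x - e) (u - c), sq_nonneg ‖u - c‖]

theorem sum_norm_sub_sq_piecewise_le [Fintype ι] [DecidableEq ι] (F : Finset ι) (x u : ι → E)
    {c e : E} {R : ℝ} (hc : ∑ i ∈ F, (u i - c) = 0) (hR : ∀ i ∈ F, ‖x i - e‖ ≤ R) :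
    ∑ i, ‖x i - F.piecewise (fun _ => c) u i‖ ^ 2
      ≤ ∑ i, ‖x i - u i‖ ^ 2 + 2 * R * ∑ i ∈ F, ‖u i - c‖ := by
  have hcross : ∑ i ∈ F, 2 * ⟪e - c, u i - c⟫ = 0 := by
    rw [← mul_sum, ← inner_sum, hc, inner_zero_right, mul_zero]
  have hF : ∑ i ∈ F, ‖x i - c‖ ^ 2
      ≤ ∑ i ∈ F, ‖x i - u i‖ ^ 2 + 2 * R * ∑ i ∈ F, ‖u i - c‖ := by
    rw [mul_sum, ← add_zero (_ + _), ← hcross, ← sum_add_distrib, ← sum_add_distrib]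
    refine sum_le_sum fun i hi => (norm_sub_sq_le_add_inner _ (u i) _ e).trans ?_
    gcongr
    exact hR i hi
  have hin : ∑ i ∈ F, ‖x i - F.piecewise (fun _ => c) u i‖ ^ 2 = ∑ i ∈ F, ‖x i - c‖ ^ 2 :=
    sum_congr rfl fun i hi => by rw [F.piecewise_eq_of_mem _ _ hi]
  have hout : ∑ i ∈ Fᶜ, ‖x i - F.piecewise (fun _ => c) u i‖ ^ 2 = ∑ i ∈ Fᶜ, ‖x i - u i‖ ^ 2 :=
    sum_congr rfl fun i hi => by rw [F.piecewise_eq_of_notMem _ _ (mem_compl.mp hi)]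
  rw [← sum_add_sum_compl F, ← sum_add_sum_compl F (fun i => ‖x i - u i‖ ^ 2), hin, hout]
  linarith

end Quadratic

section PairSums

variable {ι : Type*} [Fintype ι] [LinearOrder ι]

theorem sum_sum_lt_add_sum_sum_lt_swap_add_sum_diag {M : Type*} [AddCommMonoid M]
    (f : ι → ι → M) :
    ∑ i, ∑ j ∈ univ.filter (fun j => i < j), f i j
      + ∑ i, ∑ j ∈ univ.filter (fun j => i < j), f j i + ∑ i, f i i = ∑ i, ∑ j, f i j := by
  have hswap : ∑ i, ∑ j ∈ univ.filter (fun j => i < j), f j i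
      = ∑ i, ∑ j ∈ univ.filter (fun j => j < i), f i j :=
    Finset.sum_comm' (fun i j => by simp)
  have hsplit (i : ι) : ∑ j ∈ univ.filter (fun j => i < j), f i j
      + ∑ j ∈ univ.filter (fun j => j < i), f i j + f i i = ∑ j, f i j := by
    rw [sum_filter, sum_filter, ← Fintype.sum_ite_eq i (f i), ← sum_add_distrib,
      ← sum_add_distrib]
    refine sum_congr rfl fun j _ => ?_
    rcases lt_trichotomy i j with h | rfl | h
    · simp [h, h.not_gt, h.ne]
    · simp
    · simp [h, h.not_gt, h.ne']
  rw [hswap, ← sum_add_distrib, ← sum_add_distrib]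
  exact sum_congr rfl fun i _ => hsplit i

theorem two_mul_sum_sum_lt_of_symm {f : ι → ι → ℝ} (hsymm : ∀ i j, f j i = f i j)
    (hdiag : ∀ i, f i i = 0) :
    2 * ∑ i, ∑ j ∈ univ.filter (fun j => i < j), f i j = ∑ i, ∑ j, f i j := by
  rw [← sum_sum_lt_add_sum_sum_lt_swap_add_sum_diag]
  simp only [hsymm, hdiag, sum_const_zero, add_zero]
  ring

theorem sum_sum_lt_add_le_card_mul_sum {d : ι → ℝ} (hd : ∀ i, 0 ≤ d i) :
    ∑ i, ∑ j ∈ univ.filter (fun j => i < j), (d i + d j) ≤ Fintype.card ι * ∑ i, d i := by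
  have hsplit := sum_sum_lt_add_sum_sum_lt_swap_add_sum_diag (fun i j => d i + d j)
  have hswap : ∑ i, ∑ j ∈ univ.filter (fun j => i < j), (d j + d i)
      = ∑ i, ∑ j ∈ univ.filter (fun j => i < j), (d i + d j) :=
    sum_congr rfl fun i _ => sum_congr rfl fun j _ => add_comm _ _
  have hfull : ∑ i, ∑ j, (d i + d j) = 2 * (Fintype.card ι * ∑ i, d i) := by
    simp only [sum_add_distrib, sum_const, card_univ, nsmul_eq_mul, ← mul_sum]
    ring
  have hdiag : 0 ≤ ∑ i, (d i + d i) := sum_nonneg fun i _ => add_nonneg (hd i) (hd i)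
  linarith

end PairSums

section Penalty

variable {ι E : Type*} [SeminormedAddCommGroup E] [DecidableEq ι] {F : Finset ι}
  {w : ι → ι → ℝ} {ε : ℝ}

theorem mul_norm_sub_piecewise_le (hε : 0 ≤ ε) (hw0 : ∀ i j, 0 ≤ w i j)
    (hwF : ∀ i ∈ F, ∀ j ∈ F, i ≠ j → w i j = 1) (hwout : ∀ i j, ¬(i ∈ F ∧ j ∈ F) → w i j ≤ ε)
    (u : ι → E) (c : E) {i j : ι} (hij : i ≠ j) :
    w i j * ‖F.piecewise (fun _ => c) u i - F.piecewise (fun _ => c) u j‖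
      ≤ w i j * ‖u i - u j‖
        + ε * (‖u i - F.piecewise (fun _ => c) u i‖ + ‖u j - F.piecewise (fun _ => c) u j‖)
        - if i ∈ F ∧ j ∈ F then ‖u i - u j‖ else 0 := by
  set u' := F.piecewise (fun _ => c) u
  by_cases hF : i ∈ F ∧ j ∈ F
  · have hc : 0 ≤ ε * (‖u i - c‖ + ‖u j - c‖) := by positivity
    simp [u', hF, hwF i hF.1 j hF.2 hij, hc]
  · have hd : 0 ≤ ‖u i - u' i‖ + ‖u j - u' j‖ := by positivity
    have htri : ‖u' i - u' j‖ ≤ ‖u i - u j‖ + (‖u i - u' i‖ + ‖u j - u' j‖) := by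
      simpa only [dist_eq_norm] using dist_triangle4_left (u i) (u j) (u' i) (u' j)
    simp only [hF, if_false, sub_zero]
    nlinarith [mul_le_mul_of_nonneg_left htri (hw0 i j),
      mul_le_mul_of_nonneg_right (hwout i j hF) hd]

theorem sum_sum_lt_mul_norm_sub_piecewise_le [Fintype ι] [LinearOrder ι] (hε : 0 ≤ ε)
    (hw0 : ∀ i j, 0 ≤ w i j) (hwF : ∀ i ∈ F, ∀ j ∈ F, i ≠ j → w i j = 1)
    (hwout : ∀ i j, ¬(i ∈ F ∧ j ∈ F) → w i j ≤ ε) (u : ι → E) (c : E) :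
    ∑ i, ∑ j ∈ univ.filter (fun j => i < j),
        w i j * ‖F.piecewise (fun _ => c) u i - F.piecewise (fun _ => c) u j‖
      ≤ ∑ i, ∑ j ∈ univ.filter (fun j => i < j), w i j * ‖u i - u j‖
        + ε * Fintype.card ι * ∑ i ∈ F, ‖u i - c‖ - (∑ i ∈ F, ∑ j ∈ F, ‖u i - u j‖) / 2 := by
  set u' := F.piecewise (fun _ => c) u
  set d : ι → ℝ := fun i => ‖u i - u' i‖
  set g : ι → ι → ℝ := fun i j => if i ∈ F ∧ j ∈ F then ‖u i - u j‖ else 0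
  have hd : ∑ i, d i = ∑ i ∈ F, ‖u i - c‖ := by
    rw [← sum_subset (subset_univ F) fun i _ hi => by simp [d, u', F.piecewise_eq_of_notMem _ _ hi]]
    exact sum_congr rfl fun i hi => by simp [d, u', F.piecewise_eq_of_mem _ _ hi]
  have hg : 2 * ∑ i, ∑ j ∈ univ.filter (fun j => i < j), g i j
      = ∑ i ∈ F, ∑ j ∈ F, ‖u i - u j‖ := by
    rw [two_mul_sum_sum_lt_of_symm (fun i j => by simp only [g, and_comm, norm_sub_rev])
      (fun i => by simp [g])]
    simp only [g, ite_and, sum_ite_irrel, sum_ite_mem, univ_inter, sum_const_zero]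
  have hdsum := sum_sum_lt_add_le_card_mul_sum (d := d) fun i => norm_nonneg _
  calc ∑ i, ∑ j ∈ univ.filter (fun j => i < j), w i j * ‖u' i - u' j‖
      ≤ ∑ i, ∑ j ∈ univ.filter (fun j => i < j), (w i j * ‖u i - u j‖ + ε * (d i + d j) - g i j) :=
        sum_le_sum fun i _ => sum_le_sum fun j hj =>
          mul_norm_sub_piecewise_le hε hw0 hwF hwout u c (mem_filter.mp hj).2.ne
    _ = ∑ i, ∑ j ∈ univ.filter (fun j => i < j), w i j * ‖u i - u j‖
          + ε * ∑ i, ∑ j ∈ univ.filter (fun j => i < j), (d i + d j)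
          - ∑ i, ∑ j ∈ univ.filter (fun j => i < j), g i j := by
        simp only [mul_sum, ← sum_add_distrib, ← sum_sub_distrib]
    _ ≤ _ := by
        rw [← hd]
        nlinarith [mul_le_mul_of_nonneg_left hdsum hε]

end Penalty

theorem folder_fusion_general {p n : ℕ}
    (x : Fin n → EuclideanSpace ℝ (Fin p))
    (F : Finset (Fin n)) (m : ℕ) (hmF : F.card = m)
    (ε : ℝ) (hε : 0 ≤ ε) (hεn : ε * n < (m : ℝ) / 2)
    (w : Fin n → Fin n → ℝ) (hw0 : ∀ i j, 0 ≤ w i j)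
    (hwF : ∀ i ∈ F, ∀ j ∈ F, i ≠ j → w i j = 1)
    (hwout : ∀ i j, ¬(i ∈ F ∧ j ∈ F) → w i j ≤ ε)
    (γ : ℝ)
    (hγ : 2 * Real.sqrt (∑ i, ‖x i - (n : ℝ)⁻¹ • ∑ k, x k‖ ^ 2) /
            ((m : ℝ) / 2 - ε * n) < γ)
    (u : Fin n → EuclideanSpace ℝ (Fin p))
    (hmin : ∀ u' : Fin n → EuclideanSpace ℝ (Fin p),
      clusterEnergy x w γ u ≤ clusterEnergy x w γ u') :
    ∀ i ∈ F, ∀ j ∈ F, u i = u j := by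
  subst hmF
  set xbar := (n : ℝ)⁻¹ • ∑ k, x k
  set c := (#F : ℝ)⁻¹ • ∑ i ∈ F, u i
  set S := ∑ i ∈ F, ‖u i - c‖
  have hR (i : Fin n) : ‖x i - xbar‖ ≤ √(∑ k, ‖x k - xbar‖ ^ 2) :=
    (le_abs_self _).trans
      (Real.abs_le_sqrt (single_le_sum (fun k _ => sq_nonneg ‖x k - xbar‖) (mem_univ i)))
  have hquad := sum_norm_sub_sq_piecewise_le F x u (c := c) (sum_sub_mean_eq_zero F u)
    fun i _ => hR i
  have hpen := sum_sum_lt_mul_norm_sub_piecewise_le (F := F) hε hw0 hwF hwout u c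
  have hmean : (#F : ℝ) * S ≤ ∑ i ∈ F, ∑ j ∈ F, ‖u i - u j‖ := card_mul_sum_norm_sub_mean_le F u
  rw [Fintype.card_fin] at hpen
  have hgap : 0 < (#F : ℝ) / 2 - ε * n := by linarith
  have hthreshold := (div_lt_iff₀ hgap).mp hγ
  have hγ0 : 0 ≤ γ := (div_nonneg (by positivity) hgap.le).trans hγ.le
  have hgain : 0 ≤ (2 * √(∑ k, ‖x k - xbar‖ ^ 2) - γ * ((#F : ℝ) / 2 - ε * n)) * S := by
    have hcompare := hmin (F.piecewise (fun _ => c) u)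
    unfold clusterEnergy at hcompare
    nlinarith [mul_le_mul_of_nonneg_left hpen hγ0, mul_le_mul_of_nonneg_left hmean hγ0]
  have hS : S = 0 := le_antisymm (nonpos_of_mul_nonneg_right hgain (by linarith)) (by positivity)
  have hfused (i : Fin n) (hi : i ∈ F) : u i = c :=
    sub_eq_zero.mp <| norm_eq_zero.mp <|
      (sum_eq_zero_iff_of_nonneg fun _ _ => norm_nonneg _).mp hS i hi
  intro i hi j hj
  rw [hfused i hi, hfused j hj]

/-- If the affinities are `1` within a folder `F` of size `m ≥ 3` and at most `ε`
outside, with `εn < m/2`, then for every `γ > 2√E/(m/2 − εn)` (with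
`E = ∑ᵢ ‖xᵢ − x̄‖²`), every minimizer of the convex clustering energy has all of the
centroids belonging to `F` fused into a single point. -/
theorem folder_fusion {p n : ℕ}
    (x : Fin n → EuclideanSpace ℝ (Fin p))
    (F : Finset (Fin n)) (m : ℕ) (hmF : F.card = m) (hm : 3 ≤ m)
    (ε : ℝ) (hε : 0 ≤ ε) (hεn : ε * n < (m : ℝ) / 2)
    (w : Fin n → Fin n → ℝ) (hw0 : ∀ i j, 0 ≤ w i j) (hwsym : ∀ i j, w i j = w j i)
    (hwF : ∀ i ∈ F, ∀ j ∈ F, i ≠ j → w i j = 1)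
    (hwout : ∀ i j, ¬(i ∈ F ∧ j ∈ F) → w i j ≤ ε)
    (γ : ℝ)
    (hγ : 2 * Real.sqrt (∑ i, ‖x i - (n : ℝ)⁻¹ • ∑ k, x k‖ ^ 2) /
            ((m : ℝ) / 2 - ε * n) < γ)
    (u : Fin n → EuclideanSpace ℝ (Fin p))
    (hmin : ∀ u' : Fin n → EuclideanSpace ℝ (Fin p),
      clusterEnergy x w γ u ≤ clusterEnergy x w γ u') :
    ∀ i ∈ F, ∀ j ∈ F, u i = u j :=
  folder_fusion_general x F m hmF ε hε hεn w hw0 hwF hwout γ hγ u hmin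
end
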